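/- arXiv:1110.3192 — 12 statements merged into one kernel-verified Lean document; each statement's English description precedes it below -/
import Mathlib

section
/- For N ≥ 2 and β ∈ (1/(2N-1), 1/N), the difference set Γ_{β,N} − Γ_{β,N} equals the interval [−1,1]; equivalently, every t ∈ [−1,1] can be written as Σ_{ℓ=1}^∞ t_ℓ β^{ℓ-1}(1−β)/(N−1) with digits t_ℓ ∈ {0, ±1, …, ±(N−1)}. -/
/-!
Write `s = (1-β)/(N-1)` and `M = N-1`, and expand `t` greedily in the scales `βⁿs` with digits
in `[-M, M]`. If the remainder satisfies `|r| ≤ βⁿ`, subtracting the rounded and clamped multiple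
of `βⁿs` leaves `|r'| ≤ βⁿ⁺¹`: rounding costs at most `βⁿs/2 ≤ βⁿ⁺¹`, which is `s ≤ 2β`, i.e.
`β ≥ 1/(2N-1)`; clamping costs nothing because `βⁿ ≤ Mβⁿs + βⁿ⁺¹`, i.e. `1 ≤ Ms + β`.
As `β < 1`, the remainders tend to `0`.
-/

open Filter Topology

noncomputable def clampRound (M : ℤ) (u x : ℝ) : ℤ := max (-M) (min M (round (x / u)))

lemma abs_clampRound_le {M : ℤ} (hM : 0 ≤ M) (u x : ℝ) : |clampRound M u x| ≤ M :=
  abs_le.mpr ⟨le_max_left _ _, max_le (by omega) (min_le_left _ _)⟩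

lemma abs_sub_clampRound_mul_le {M : ℤ} (hM : 0 ≤ M) {u ε x : ℝ} (hu : 0 < u) (hε : u ≤ 2 * ε)
    (hx : |x| ≤ M * u + ε) : |x - clampRound M u x * u| ≤ ε := by
  set q := round (x / u)
  have hround : |x - q * u| ≤ u / 2 := by
    have hscale : x - q * u = (x / u - q) * u := by field_simp
    rw [hscale, abs_mul, abs_of_pos hu]
    nlinarith [abs_sub_round (x / u)]
  rw [abs_le] at hround hx ⊢
  rcases le_total q (-M) with hlow | hlow
  · have hqr : (q : ℝ) ≤ -M := by exact_mod_cast hlow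
    rw [clampRound, max_eq_left (min_le_of_right_le hlow)]
    push_cast
    constructor <;> nlinarith
  rcases le_total M q with hhigh | hhigh
  · have hqr : (M : ℝ) ≤ q := by exact_mod_cast hhigh
    rw [clampRound, min_eq_left hhigh, max_eq_right (by omega)]
    constructor <;> nlinarith
  · rw [clampRound, min_eq_right hhigh, max_eq_right hlow]
    constructor <;> linarith

section GreedyExpansion

variable (M : ℤ) (β s t : ℝ)

noncomputable def greedyRemainder : ℕ → ℝ
  | 0 => t
  | n + 1 => greedyRemainder n - clampRound M (β ^ n * s) (greedyRemainder n) * (β ^ n * s)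

noncomputable def greedyDigit (n : ℕ) : ℤ :=
  clampRound M (β ^ n * s) (greedyRemainder M β s t n)

lemma greedyRemainder_succ (n : ℕ) :
    greedyRemainder M β s t (n + 1) =
      greedyRemainder M β s t n - greedyDigit M β s t n * (β ^ n * s) :=
  rfl

lemma sum_range_greedyDigit_mul (n : ℕ) :
    ∑ k ∈ Finset.range n, (greedyDigit M β s t k : ℝ) * (β ^ k * s) =
      t - greedyRemainder M β s t n := by
  induction n with
  | zero => simp [greedyRemainder]
  | succ n ih => rw [Finset.sum_range_succ, ih, greedyRemainder_succ]; ring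

variable {M β s t}

lemma abs_greedyRemainder_le (hM : 0 ≤ M) (hs : 0 < s) (hgap : s ≤ 2 * β)
    (hcover : 1 ≤ M * s + β) (ht : |t| ≤ 1) (n : ℕ) : |greedyRemainder M β s t n| ≤ β ^ n := by
  have hβ : 0 < β := by linarith
  induction n with
  | zero => simpa [greedyRemainder] using ht
  | succ n ih =>
    rw [greedyRemainder_succ]
    refine abs_sub_clampRound_mul_le hM (by positivity) ?_ ?_
    · calc β ^ n * s ≤ β ^ n * (2 * β) := by gcongr
        _ = 2 * β ^ (n + 1) := by ring
    · calc |greedyRemainder M β s t n| ≤ β ^ n := ih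
        _ ≤ β ^ n * (M * s + β) := le_mul_of_one_le_right (by positivity) hcover
        _ = M * (β ^ n * s) + β ^ (n + 1) := by ring

theorem hasSum_greedyDigit_mul (hM : 0 ≤ M) (hβ : β < 1) (hs : 0 < s) (hgap : s ≤ 2 * β)
    (hcover : 1 ≤ M * s + β) (ht : |t| ≤ 1) :
    HasSum (fun n ↦ (greedyDigit M β s t n : ℝ) * (β ^ n * s)) t := by
  have hβ0 : 0 < β := by linarith
  have hsummable : Summable (fun n ↦ (greedyDigit M β s t n : ℝ) * (β ^ n * s)) := by
    refine .of_norm_bounded ((summable_geometric_of_lt_one hβ0.le hβ).mul_left (M * s)) fun n ↦ ?_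
    have hdigit : |(greedyDigit M β s t n : ℝ)| ≤ M := by
      exact_mod_cast abs_clampRound_le hM _ _
    rw [Real.norm_eq_abs, abs_mul, abs_of_pos (by positivity : 0 < β ^ n * s)]
    calc |(greedyDigit M β s t n : ℝ)| * (β ^ n * s) ≤ M * (β ^ n * s) := by gcongr
      _ = M * s * β ^ n := by ring
  have hremainder : Tendsto (greedyRemainder M β s t) atTop (𝓝 0) :=
    squeeze_zero_norm (abs_greedyRemainder_le hM hs hgap hcover ht)
      (tendsto_pow_atTop_nhds_zero_of_lt_one hβ0.le hβ)
  rw [hsummable.hasSum_iff_tendsto_nat]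
  simpa [sum_range_greedyDigit_mul] using tendsto_const_nhds.sub hremainder

end GreedyExpansion

/-- For N ≥ 2 and β ∈ (1/(2N-1), 1/N), every t ∈ [−1,1] has an
Ω_{±N}-code, i.e. Γ_{β,N} − Γ_{β,N} = [−1,1]. -/
theorem stmt1 (N : ℕ) (hN : 2 ≤ N) (β : ℝ)
    (h1 : 1 / (2 * (N : ℝ) - 1) < β) (h2 : β < 1 / (N : ℝ))
    (t : ℝ) (ht : t ∈ Set.Icc (-1 : ℝ) 1) :
    ∃ c : ℕ → ℤ, (∀ n, |c n| ≤ (N : ℤ) - 1) ∧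
      t = ∑' n, (c n : ℝ) * β ^ n * (1 - β) / ((N : ℝ) - 1) := by
  have hN' : (2 : ℝ) ≤ N := by exact_mod_cast hN
  have hβ : β < 1 := h2.trans_le (by rw [div_le_one (by linarith)]; linarith)
  have hgap : (1 - β) / ((N : ℝ) - 1) ≤ 2 * β := by
    rw [div_lt_iff₀ (by linarith)] at h1
    rw [div_le_iff₀ (by linarith)]
    linarith
  have hcover : 1 ≤ (((N : ℤ) - 1 : ℤ) : ℝ) * ((1 - β) / ((N : ℝ) - 1)) + β := by
    push_cast
    rw [mul_div_cancel₀ _ (by linarith)]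
    linarith
  have hsum := hasSum_greedyDigit_mul (by omega) hβ (div_pos (by linarith) (by linarith)) hgap
    hcover (abs_le.mpr ht)
  refine ⟨greedyDigit ((N : ℤ) - 1) β ((1 - β) / ((N : ℝ) - 1)) t,
    fun n ↦ abs_clampRound_le (by omega) _ _, ?_⟩
  exact hsum.tsum_eq.symm.trans (tsum_congr fun n ↦ by ring)
end

section
/- For N ≥ 2, β ∈ (1/(2N-1), 1/N), t ∈ [−1,1] with Ω_{±N}-code (t_ℓ), the set D_t := π(∏_ℓ ({0,…,N−1} ∩ ({0,…,N−1}+t_ℓ))) is centrally symmetric about (1+t)/2: namely 1 + t − D_t = D_t. -/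
/-! The map `j ↦ N - 1 + c - j` is an involution of the admissible digit sequences, and since
the weights `β ^ n (1 - β) / (N - 1)` of the constant digit `N - 1` sum to `1`, it acts on the
values as `x ↦ 1 + t - x`. -/

theorem Function.Involutive.image_eq_of_image_subset {α : Type*} {f : α → α}
    (hf : f.Involutive) {s : Set α} (h : f '' s ⊆ s) : f '' s = s :=
  h.antisymm fun x hx => ⟨f x, h ⟨x, hx, rfl⟩, hf x⟩

lemma summable_mul_geometric_of_abs_le {a : ℕ → ℝ} {M β : ℝ} (ha : ∀ n, |a n| ≤ M)
    (hβ : |β| < 1) : Summable fun n => a n * β ^ n := by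
  refine .of_norm_bounded ((summable_geometric_of_lt_one (abs_nonneg β) hβ).mul_left M)
    fun n => ?_
  rw [Real.norm_eq_abs, abs_mul, abs_pow]
  exact mul_le_mul_of_nonneg_right (ha n) (by positivity)

lemma tsum_digit_reflect {N : ℕ} (hN : 2 ≤ N) {β : ℝ} (hβ : |β| < 1) {a b : ℕ → ℝ}
    (ha : Summable fun n => a n * β ^ n) (hb : Summable fun n => b n * β ^ n) :
    ∑' n, ((N : ℝ) - 1 + b n - a n) * β ^ n * (1 - β) / ((N : ℝ) - 1)
      = 1 + ∑' n, b n * β ^ n * (1 - β) / ((N : ℝ) - 1)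
          - ∑' n, a n * β ^ n * (1 - β) / ((N : ℝ) - 1) := by
  have hN1 : (N : ℝ) - 1 ≠ 0 := by
    have : (2 : ℝ) ≤ N := by exact_mod_cast hN
    linarith
  have hβ1 : 1 - β ≠ 0 := by linarith [le_abs_self β]
  have hsplit : ∀ n, ((N : ℝ) - 1 + b n - a n) * β ^ n * (1 - β) / ((N : ℝ) - 1)
      = (1 - β) * β ^ n + (b n * β ^ n * (1 - β) / ((N : ℝ) - 1)
          - a n * β ^ n * (1 - β) / ((N : ℝ) - 1)) := fun n => by
    field_simp
    ring
  have ha' := (ha.mul_right (1 - β)).div_const ((N : ℝ) - 1)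
  have hb' := (hb.mul_right (1 - β)).div_const ((N : ℝ) - 1)
  have hg := (summable_geometric_of_abs_lt_one hβ).mul_left (1 - β)
  rw [tsum_congr hsplit, hg.tsum_add (hb'.sub ha'), hb'.tsum_sub ha', tsum_mul_left,
    tsum_geometric_of_abs_lt_one hβ, mul_inv_cancel₀ hβ1]
  ring

theorem stmt4_general (N : ℕ) (hN : 2 ≤ N) (β t : ℝ)
    (h1 : 1 / (2 * (N : ℝ) - 1) < β) (h2 : β < 1 / (N : ℝ))
    (c : ℕ → ℤ)
    (hcode : t = ∑' n, (c n : ℝ) * β ^ n * (1 - β) / ((N : ℝ) - 1)) :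
    (fun x => 1 + t - x) ''
        {x | ∃ j : ℕ → ℤ,
          (∀ n, (0 ≤ j n ∧ j n < N) ∧ (0 ≤ j n - c n ∧ j n - c n < N)) ∧
          x = ∑' n, (j n : ℝ) * β ^ n * (1 - β) / ((N : ℝ) - 1)}
      = {x | ∃ j : ℕ → ℤ,
          (∀ n, (0 ≤ j n ∧ j n < N) ∧ (0 ≤ j n - c n ∧ j n - c n < N)) ∧
          x = ∑' n, (j n : ℝ) * β ^ n * (1 - β) / ((N : ℝ) - 1)} := by
  have hN2 : (2 : ℝ) ≤ N := by exact_mod_cast hN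
  have hβ : |β| < 1 := by
    have hβ0 : 0 < β := lt_trans (one_div_pos.2 (by linarith)) h1
    have hβ1 : β < 1 := h2.trans_le (by rw [div_le_one (by linarith)]; linarith)
    rwa [abs_of_pos hβ0]
  refine Function.Involutive.image_eq_of_image_subset (fun x => by ring) ?_
  rintro _ ⟨_, ⟨j, hj, rfl⟩, rfl⟩
  have hbound : ∀ a : ℕ → ℤ, (∀ n, |a n| < N) → Summable fun n => (a n : ℝ) * β ^ n :=
    fun a ha => summable_mul_geometric_of_abs_le (M := N) (fun n => by exact_mod_cast (ha n).le) hβ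
  have hjc : ∀ n, |j n| < N ∧ |c n| < N := fun n => by
    have := hj n
    exact ⟨abs_lt.2 ⟨by omega, by omega⟩, abs_lt.2 ⟨by omega, by omega⟩⟩
  refine ⟨fun n => (N : ℤ) - 1 + c n - j n, fun n => by have := hj n; dsimp only; omega, ?_⟩
  push_cast
  rw [tsum_digit_reflect hN hβ (hbound j fun n => (hjc n).1) (hbound c fun n => (hjc n).2),
    hcode]

/-- the set D_t = π(∏ ({0,…,N−1} ∩ ({0,…,N−1}+t_ℓ))) is
centrally symmetric: 1 + t − D_t = D_t. -/
theorem stmt4 (N : ℕ) (hN : 2 ≤ N) (β t : ℝ)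
    (h1 : 1 / (2 * (N : ℝ) - 1) < β) (h2 : β < 1 / (N : ℝ))
    (ht : t ∈ Set.Icc (-1 : ℝ) 1)
    (c : ℕ → ℤ) (hc : ∀ n, |c n| ≤ (N : ℤ) - 1)
    (hcode : t = ∑' n, (c n : ℝ) * β ^ n * (1 - β) / ((N : ℝ) - 1)) :
    (fun x => 1 + t - x) ''
        {x | ∃ j : ℕ → ℤ,
          (∀ n, (0 ≤ j n ∧ j n < N) ∧ (0 ≤ j n - c n ∧ j n - c n < N)) ∧
          x = ∑' n, (j n : ℝ) * β ^ n * (1 - β) / ((N : ℝ) - 1)}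
      = {x | ∃ j : ℕ → ℤ,
          (∀ n, (0 ≤ j n ∧ j n < N) ∧ (0 ≤ j n - c n ∧ j n - c n < N)) ∧
          x = ∑' n, (j n : ℝ) * β ^ n * (1 - β) / ((N : ℝ) - 1)} :=
  stmt4_general N hN β t h1 h2 c hcode
end

section
/- Let N ≥ 2, β ∈ (1/(2N-1), 1/N), and suppose (N−1−|t_ℓ|)_{ℓ≥1} = σ (σ+τ)^∞ where σ = (σ_ℓ)_{ℓ=1}^q, τ = (τ_ℓ)_{ℓ=1}^q, and σ+τ has entries in {0,…,N−1}. Then Γ_t := π(∏_{ℓ=1}^∞ {0,…,N−1−|t_ℓ|}) is the attractor of the IFS {f_s(x) = β^q(x+s) : s ∈ S}, where S = {β^{−q} Σ_{ℓ=1}^{2q} j_ℓ β^{ℓ-1}(1−β)/(N−1) : (j_ℓ)_{ℓ=1}^{2q} ≤ στ coordinatewise, j_ℓ ∈ {0,…,N−1}}. -/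
/-!
Let `b = σ (σ+τ)^∞` be the sequence of digit bounds (`periodicDigits`) and
`π a = ∑ aₙ βⁿ κ` with `κ = (1-β)/(N-1)` (`digitSum`). Since `b` is `σ` followed by a copy of
itself shifted `q` places with `τ` added on the first `q` of them, `b = στ0^∞ + S_q b`, where
`στ0^∞` is `blockDigits` and `S_q` is `shiftRight q`. In `ℕ`, the digits below `u + S_q v` are
exactly the sums `c + S_q d` with `c ≤ u`, `d ≤ v`, and `π (S_q d) = β^q π d`. Hence
`Γ_t = π {a ≤ b} = ⋃_{c ≤ στ} (π c + β^q Γ_t)`, the attractor equation with `s = β^{-q} π c`.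
-/

/-- The set Γ_t = π(∏ {0,…,N−1−|t_ℓ|}). -/
noncomputable def GammaT (N : ℕ) (β : ℝ) (t : ℕ → ℤ) : Set ℝ :=
  {x | ∃ a : ℕ → ℕ, (∀ n, (a n : ℤ) ≤ (N : ℤ) - 1 - |t n|) ∧
    x = ∑' n, (a n : ℝ) * β ^ n * (1 - β) / ((N : ℝ) - 1)}

open Set

def shiftRight (q : ℕ) (d : ℕ → ℕ) (m : ℕ) : ℕ := if q ≤ m then d (m - q) else 0

lemma shiftRight_mono {q : ℕ} {d e : ℕ → ℕ} (h : d ≤ e) : shiftRight q d ≤ shiftRight q e := by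
  intro m
  unfold shiftRight
  split_ifs
  exacts [h _, le_rfl]

lemma shiftRight_le {q K : ℕ} {d : ℕ → ℕ} (hd : ∀ n, d n ≤ K) (m : ℕ) :
    shiftRight q d m ≤ K := by
  unfold shiftRight
  split_ifs
  exacts [hd _, Nat.zero_le K]

lemma le_add_shiftRight_iff {a u v : ℕ → ℕ} {q : ℕ} :
    a ≤ u + shiftRight q v ↔ ∃ c ≤ u, ∃ d ≤ v, a = c + shiftRight q d := by
  constructor
  · intro h
    refine ⟨fun m => min (a m) (u m), fun m => min_le_right _ _,
      fun n => a (n + q) - min (a (n + q)) (u (n + q)), fun n => ?_, funext fun m => ?_⟩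
    · have := h (n + q)
      simp only [Pi.add_apply, shiftRight, le_add_iff_nonneg_left, zero_le, ↓reduceIte,
        Nat.add_sub_cancel] at this
      show a (n + q) - min (a (n + q)) (u (n + q)) ≤ v n
      omega
    · have := h m
      simp only [Pi.add_apply, shiftRight] at this ⊢
      split_ifs at this ⊢ with hm
      · rw [Nat.sub_add_cancel hm]
        omega
      · omega
  · rintro ⟨c, hc, d, hd, rfl⟩
    exact add_le_add hc (shiftRight_mono hd)

noncomputable def digitSum (β κ : ℝ) (a : ℕ → ℕ) : ℝ := ∑' n, (a n : ℝ) * β ^ n * κ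

section DigitSum

variable {β κ : ℝ}

lemma summable_digitSum (hβ : |β| < 1) {a : ℕ → ℕ} {K : ℕ} (ha : ∀ n, a n ≤ K) :
    Summable fun n => (a n : ℝ) * β ^ n * κ := by
  refine .of_norm_bounded (((summable_geometric_of_abs_lt_one (abs_lt.2 ⟨?_, hβ⟩)).mul_left
    (K * |κ|))) fun n => ?_
  · exact neg_lt_of_abs_lt (by rwa [abs_abs])
  rw [norm_mul, norm_mul, norm_pow, Real.norm_eq_abs, Real.norm_eq_abs, Real.norm_eq_abs,
    Nat.abs_cast]
  have : (a n : ℝ) ≤ K := by exact_mod_cast ha n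
  calc (a n : ℝ) * |β| ^ n * |κ| ≤ K * |β| ^ n * |κ| := by gcongr
    _ = _ := by ring

lemma digitSum_add (hβ : |β| < 1) {a b : ℕ → ℕ} {K : ℕ} (ha : ∀ n, a n ≤ K)
    (hb : ∀ n, b n ≤ K) : digitSum β κ (a + b) = digitSum β κ a + digitSum β κ b := by
  unfold digitSum
  rw [← (summable_digitSum hβ ha).tsum_add (summable_digitSum hβ hb)]
  congr 1 with n
  push_cast [Pi.add_apply]
  ring

lemma digitSum_shiftRight (hβ : |β| < 1) (q : ℕ) {d : ℕ → ℕ} {K : ℕ} (hd : ∀ n, d n ≤ K) :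
    digitSum β κ (shiftRight q d) = β ^ q * digitSum β κ d := by
  unfold digitSum
  rw [← (summable_digitSum hβ (shiftRight_le hd)).sum_add_tsum_nat_add q, ← tsum_mul_left]
  have hhead : ∀ m ∈ Finset.range q, (shiftRight q d m : ℝ) * β ^ m * κ = 0 := fun m hm => by
    simp [shiftRight, Finset.mem_range.1 hm]
  rw [Finset.sum_eq_zero hhead, zero_add]
  congr 1 with n
  simp only [shiftRight, le_add_iff_nonneg_left, zero_le, ↓reduceIte, Nat.add_sub_cancel]
  ring

lemma digitSum_eq_sum_range {c : ℕ → ℕ} {m : ℕ} (hc : ∀ n, m ≤ n → c n = 0) :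
    digitSum β κ c = ∑ n ∈ Finset.range m, (c n : ℝ) * β ^ n * κ :=
  tsum_eq_sum fun n hn => by simp [hc n (by simpa using hn)]

lemma image_digitSum_Iic_add_shiftRight (hβ : |β| < 1) (q : ℕ) {u v : ℕ → ℕ} {K : ℕ}
    (hu : ∀ n, u n ≤ K) (hv : ∀ n, v n ≤ K) :
    digitSum β κ '' Iic (u + shiftRight q v)
      = ⋃ c ∈ Iic u, (fun x => digitSum β κ c + β ^ q * x) '' (digitSum β κ '' Iic v) := by
  have hsplit : ∀ c ≤ u, ∀ d ≤ v,
      digitSum β κ (c + shiftRight q d) = digitSum β κ c + β ^ q * digitSum β κ d :=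
    fun c hc d hd => by
      have hdK : ∀ n, d n ≤ K := fun n => (hd n).trans (hv n)
      rw [digitSum_add hβ (fun n => (hc n).trans (hu n)) (shiftRight_le hdK),
        digitSum_shiftRight hβ q hdK]
  ext x
  simp only [mem_image, mem_iUnion, mem_Iic, exists_prop, le_add_shiftRight_iff]
  constructor
  · rintro ⟨_, ⟨c, hc, d, hd, rfl⟩, rfl⟩
    exact ⟨c, hc, _, ⟨d, hd, rfl⟩, (hsplit c hc d hd).symm⟩
  · rintro ⟨c, hc, _, ⟨d, hd, rfl⟩, rfl⟩
    exact ⟨_, ⟨c, hc, d, hd, rfl⟩, hsplit c hc d hd⟩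

end DigitSum

def periodicDigits (σ τ : ℕ → ℕ) (q n : ℕ) : ℕ :=
  if n < q then σ n else σ ((n - q) % q) + τ ((n - q) % q)

def blockDigits (σ τ : ℕ → ℕ) (q l : ℕ) : ℕ :=
  if l < 2 * q then (if l < q then σ l else τ (l - q)) else 0

lemma periodicDigits_eq_add_shiftRight (σ τ : ℕ → ℕ) (q : ℕ) :
    periodicDigits σ τ q = blockDigits σ τ q + shiftRight q (periodicDigits σ τ q) := by
  funext n
  simp only [periodicDigits, blockDigits, shiftRight, Pi.add_apply]
  rcases lt_or_ge n q with h | h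
  · simp [h, show n < 2 * q by omega]
  rcases lt_or_ge n (2 * q) with h' | h'
  · simp [h, h', show ¬n < q by omega, show n - q < q by omega, Nat.mod_eq_of_lt, add_comm]
  · have hmod : (n - q - q) % q = (n - q) % q := by
      rw [show n - q = n - q - q + q by omega, Nat.add_mod_right, Nat.add_sub_cancel]
    simp [h, show ¬n < q by omega, show ¬n < 2 * q by omega, show ¬n - q < q by omega, hmod]

lemma blockDigits_le_periodicDigits (σ τ : ℕ → ℕ) (q : ℕ) :
    blockDigits σ τ q ≤ periodicDigits σ τ q := fun n => by
  rw [congrFun (periodicDigits_eq_add_shiftRight σ τ q) n, Pi.add_apply]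
  exact Nat.le_add_right _ _

lemma image_digitSum_Iic_blockDigits {β κ : ℝ} (σ τ : ℕ → ℕ) (q : ℕ) (r : ℝ) :
    {x : ℝ | ∃ c : ℕ → ℕ, (∀ l < 2 * q, c l ≤ (if l < q then σ l else τ (l - q))) ∧
      x = r * ∑ l ∈ Finset.range (2 * q), (c l : ℝ) * β ^ l * κ}
      = (fun c => r * digitSum β κ c) '' Iic (blockDigits σ τ q) := by
  have hsum : ∀ c ≤ blockDigits σ τ q,
      digitSum β κ c = ∑ l ∈ Finset.range (2 * q), (c l : ℝ) * β ^ l * κ := fun c hc =>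
    digitSum_eq_sum_range fun n hn => by simpa [blockDigits, not_lt.2 hn] using hc n
  ext x
  simp only [mem_ofPred_eq, mem_image, mem_Iic]
  constructor
  · rintro ⟨c, hc, rfl⟩
    let c' : ℕ → ℕ := fun l => if l < 2 * q then c l else 0
    have hc' : c' ≤ blockDigits σ τ q := fun l => by
      by_cases hl : l < 2 * q <;> simp [c', blockDigits, hl, hc]
    refine ⟨c', hc', ?_⟩
    rw [hsum c' hc']
    exact congrArg _ (Finset.sum_congr rfl fun l hl => by simp [c', Finset.mem_range.1 hl])
  · rintro ⟨c, hc, rfl⟩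
    refine ⟨c, fun l hl => by simpa [blockDigits, hl] using hc l, by rw [hsum c hc]⟩

theorem stmt8_general (N q : ℕ) (hN : 2 ≤ N) (β : ℝ)
    (h1 : 1 / (2 * (N : ℝ) - 1) < β) (h2 : β < 1 / (N : ℝ))
    (t : ℕ → ℤ)
    (σ τ : ℕ → ℕ)
    (hper : ∀ n, (N : ℤ) - 1 - |t n|
      = if n < q then (σ n : ℤ) else ((σ ((n - q) % q) + τ ((n - q) % q) : ℕ) : ℤ)) :
    GammaT N β t
      = ⋃ s ∈ {x : ℝ | ∃ c : ℕ → ℕ,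
            (∀ l < 2 * q, c l ≤ (if l < q then σ l else τ (l - q))) ∧
            x = (β ^ q)⁻¹ *
              ∑ l ∈ Finset.range (2 * q), (c l : ℝ) * β ^ l * (1 - β) / ((N : ℝ) - 1)},
          (fun x => β ^ q * (x + s)) '' GammaT N β t := by
  have hNR : (2 : ℝ) ≤ N := by exact_mod_cast hN
  have hβ0 : 0 < β := lt_trans (one_div_pos.2 (by linarith)) h1
  have hβ : |β| < 1 := by
    rw [abs_of_pos hβ0]
    exact h2.trans_le ((div_le_one (by positivity)).2 (by linarith))
  have hP : ∀ n, (N : ℤ) - 1 - |t n| = periodicDigits σ τ q n := fun n => by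
    rw [hper n, periodicDigits]; split_ifs <;> rfl
  have hbound : ∀ n, periodicDigits σ τ q n ≤ N - 1 := fun n => by
    have := hP n; have := abs_nonneg (t n); omega
  have hblock : ∀ n, blockDigits σ τ q n ≤ N - 1 :=
    fun n => (blockDigits_le_periodicDigits σ τ q n).trans (hbound n)
  have hΓ : GammaT N β t = digitSum β ((1 - β) / (N - 1)) '' Iic (periodicDigits σ τ q) := by
    ext x
    simp only [GammaT, hP, Nat.cast_le, mem_ofPred_eq, mem_image, mem_Iic, digitSum, mul_div_assoc]
    exact exists_congr fun a => and_congr_right fun _ => eq_comm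
  simp only [mul_div_assoc]
  rw [image_digitSum_Iic_blockDigits, biUnion_image, hΓ]
  nth_rewrite 1 [periodicDigits_eq_add_shiftRight]
  rw [image_digitSum_Iic_add_shiftRight hβ q hblock hbound]
  refine iUnion₂_congr fun c _ => congrArg (· '' _) (funext fun x => ?_)
  rw [mul_add, mul_inv_cancel_left₀ (pow_ne_zero q hβ0.ne'), add_comm]

/-- if (N−1−|t_ℓ|) = σ(σ+τ)^∞, then Γ_t is the attractor of the
IFS {x ↦ β^q (x+s) : s ∈ S} with S as described. -/
theorem stmt8 (N q : ℕ) (hN : 2 ≤ N) (hq : 0 < q) (β : ℝ)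
    (h1 : 1 / (2 * (N : ℝ) - 1) < β) (h2 : β < 1 / (N : ℝ))
    (t : ℕ → ℤ) (ht : ∀ n, |t n| ≤ (N : ℤ) - 1)
    (σ τ : ℕ → ℕ) (hστ : ∀ l < q, σ l + τ l ≤ N - 1)
    (hper : ∀ n, (N : ℤ) - 1 - |t n|
      = if n < q then (σ n : ℤ) else ((σ ((n - q) % q) + τ ((n - q) % q) : ℕ) : ℤ)) :
    GammaT N β t
      = ⋃ s ∈ {x : ℝ | ∃ c : ℕ → ℕ,
            (∀ l < 2 * q, c l ≤ (if l < q then σ l else τ (l - q))) ∧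
            x = (β ^ q)⁻¹ *
              ∑ l ∈ Finset.range (2 * q), (c l : ℝ) * β ^ l * (1 - β) / ((N : ℝ) - 1)},
          (fun x => β ^ q * (x + s)) '' GammaT N β t :=
  stmt8_general N q hN β h1 h2 t σ τ hper
end

section
/- For m ≥ 2 and 1/m < β < β' < 1, the quasi-greedy β'-expansion of 1 with digit set {0,…,m−1} is strictly smaller in the lexicographical order than the quasi-greedy β-expansion of 1; i.e., the map β ↦ (δ_ℓ(β)) is strictly decreasing. -/
/-- Strict lexicographic order on sequences. -/
def LexLt (a b : ℕ → ℕ) : Prop := ∃ n, (∀ m < n, a m = b m) ∧ a n < b n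

/-- Non-strict lexicographic order on sequences. -/
def LexLe (a b : ℕ → ℕ) : Prop := a = b ∨ LexLt a b

/-- (d_ℓ) (0-indexed) is a β-expansion of 1 with digit set {0,…,m−1}. -/
def IsExpansionOf1 (m : ℕ) (β : ℝ) (d : ℕ → ℕ) : Prop :=
  (∀ n, d n < m) ∧ (∑' n, (d n : ℝ) * β ^ (n + 1)) = 1

/-- Infinitely many nonzero digits. -/
def IsInfiniteExp (d : ℕ → ℕ) : Prop := ∀ n, ∃ k ≥ n, d k ≠ 0

/-- The quasi-greedy β-expansion of 1: the lexicographically largest infinite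
expansion of 1. -/
def IsQuasiGreedy (m : ℕ) (β : ℝ) (d : ℕ → ℕ) : Prop :=
  IsExpansionOf1 m β d ∧ IsInfiniteExp d ∧
    ∀ e, IsExpansionOf1 m β e → IsInfiniteExp e → LexLe e d

/-!
Let `δ'` be the quasi-greedy `β'`-expansion of `1`. Read in the smaller base `β`, it has value
`< 1`. The quasi-greedy `β`-expansion `δ` lexicographically dominates every digit sequence `e`
of `β`-value `< 1`: if `e` exceeded `δ` first at position `n`, then the remainder
`1 - ∑_{k ≤ n} e_k β^(k+1)` would be positive and, since `δ` has the smaller prefix, at most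
`β^(n+1) (m-1) β / (1-β)`, the most a tail can carry. The quasi-greedy algorithm expands every
`x ∈ (0, (m-1) β / (1-β)]` with infinitely many nonzero digits (this interval is invariant
because `mβ ≥ 1`), so `e_0 … e_n` would extend to an infinite expansion of `1` exceeding `δ`.
-/

open Finset Filter Topology

lemma lexLt_iff_toLex_lt {a b : ℕ → ℕ} : LexLt a b ↔ toLex a < toLex b := Iff.rfl

lemma LexLe.not_lexLt {a b : ℕ → ℕ} (h : LexLe a b) : ¬ LexLt b a := by
  rw [lexLt_iff_toLex_lt]
  rcases h with rfl | h
  · exact lt_irrefl _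
  · exact lt_asymm h

noncomputable def expVal (β : ℝ) (d : ℕ → ℕ) : ℝ := ∑' n, (d n : ℝ) * β ^ (n + 1)

def splice (a : ℕ → ℕ) (N : ℕ) (f : ℕ → ℕ) (k : ℕ) : ℕ := if k < N then a k else f (k - N)

lemma splice_of_lt {a f : ℕ → ℕ} {N k : ℕ} (hk : k < N) : splice a N f k = a k := if_pos hk

lemma splice_add {a f : ℕ → ℕ} {N : ℕ} (k : ℕ) : splice a N f (k + N) = f k := by
  simp [splice]

section Digits

variable {m : ℕ} {β : ℝ} {d : ℕ → ℕ}

lemma cast_le_sub_one_of_lt {k : ℕ} (h : k < m) : (k : ℝ) ≤ m - 1 := by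
  have : (k : ℝ) + 1 ≤ m := by exact_mod_cast h
  linarith

lemma summable_digits (hβ0 : 0 ≤ β) (hβ1 : β < 1) (hd : ∀ n, d n < m) :
    Summable fun n => (d n : ℝ) * β ^ (n + 1) := by
  refine .of_nonneg_of_le (fun n => by positivity) (fun n => ?_)
    ((summable_geometric_of_lt_one hβ0 hβ1).mul_left (((m : ℝ) - 1) * β))
  rw [pow_succ', ← mul_assoc]
  gcongr
  exact cast_le_sub_one_of_lt (hd n)

lemma expVal_le (hβ0 : 0 ≤ β) (hβ1 : β < 1) (hd : ∀ n, d n < m) :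
    expVal β d ≤ (m - 1) * β / (1 - β) := by
  calc expVal β d ≤ ∑' n, ((m : ℝ) - 1) * β ^ (n + 1) := by
        refine (summable_digits hβ0 hβ1 hd).tsum_le_tsum (fun n => ?_)
          ((summable_geometric_of_lt_one hβ0 hβ1).mul_left (((m : ℝ) - 1) * β) |>.congr
            fun n => by ring)
        gcongr
        exact cast_le_sub_one_of_lt (hd n)
    _ = (m - 1) * β / (1 - β) := by
        simp_rw [pow_succ', ← mul_assoc]
        rw [tsum_mul_left, tsum_geometric_of_lt_one hβ0 hβ1, div_eq_mul_inv]

lemma sum_le_expVal (hβ0 : 0 ≤ β) (hβ1 : β < 1) (hd : ∀ n, d n < m) (N : ℕ) :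
    ∑ k ∈ range N, (d k : ℝ) * β ^ (k + 1) ≤ expVal β d :=
  (summable_digits hβ0 hβ1 hd).sum_le_tsum _ fun _ _ => by positivity

lemma expVal_eq_sum_add_shift (hβ0 : 0 ≤ β) (hβ1 : β < 1) (hd : ∀ n, d n < m) (N : ℕ) :
    expVal β d = ∑ k ∈ range N, (d k : ℝ) * β ^ (k + 1) + β ^ N * expVal β (d <| · + N) := by
  rw [expVal, ← (summable_digits hβ0 hβ1 hd).sum_add_tsum_nat_add N, expVal, ← tsum_mul_left]
  congr 2 with k
  ring

lemma expVal_lt_expVal {β' : ℝ} (hβ0 : 0 < β) (hββ' : β < β') (hβ' : β' < 1)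
    (hd : ∀ n, d n < m) {k : ℕ} (hk : d k ≠ 0) : expVal β d < expVal β' d := by
  refine Summable.tsum_lt_tsum (i := k) (fun n => ?_) ?_ (summable_digits hβ0.le (hββ'.trans hβ') hd)
    (summable_digits (hβ0.trans hββ').le hβ' hd)
  · gcongr
  · have : (0 : ℝ) < d k := by exact_mod_cast Nat.pos_of_ne_zero hk
    gcongr

lemma splice_lt {a f : ℕ → ℕ} (ha : ∀ n, a n < m) (hf : ∀ n, f n < m) (N n : ℕ) :
    splice a N f n < m := by
  unfold splice
  split_ifs
  exacts [ha n, hf _]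

lemma expVal_splice {a f : ℕ → ℕ} (hβ0 : 0 ≤ β) (hβ1 : β < 1) (ha : ∀ n, a n < m)
    (hf : ∀ n, f n < m) (N : ℕ) :
    expVal β (splice a N f) = ∑ k ∈ range N, (a k : ℝ) * β ^ (k + 1) + β ^ N * expVal β f := by
  rw [expVal_eq_sum_add_shift hβ0 hβ1 (splice_lt ha hf N) N]
  simp_rw [splice_add]
  congr 1
  exact sum_congr rfl fun k hk => by rw [splice_of_lt (mem_range.1 hk)]

end Digits

section QuasiGreedyAlgorithm

variable {m : ℕ} {β x : ℝ}

/-- The largest digit `< m` that is `< x / β` (for `x / β > 0`). -/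
noncomputable def qgDigit (m : ℕ) (β x : ℝ) : ℕ := min (m - 1) (⌈x / β⌉₊ - 1)

noncomputable def qgShift (m : ℕ) (β x : ℝ) : ℝ := x / β - qgDigit m β x

noncomputable def qgDigits (m : ℕ) (β x : ℝ) (k : ℕ) : ℕ := qgDigit m β ((qgShift m β)^[k] x)

lemma qgDigit_lt (hm : 0 < m) : qgDigit m β x < m := (min_le_left _ _).trans_lt (by omega)

lemma cast_qgDigit_lt (hx : 0 < x / β) : (qgDigit m β x : ℝ) < x / β := by
  have h : (qgDigit m β x : ℝ) ≤ ((⌈x / β⌉₊ - 1 : ℕ) : ℝ) := by exact_mod_cast min_le_right _ _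
  rw [Nat.cast_sub (Nat.ceil_pos.2 hx), Nat.cast_one] at h
  linarith [Nat.ceil_lt_add_one hx.le]

lemma qgDigit_eq_or_le (hx : 0 < x / β) :
    qgDigit m β x = m - 1 ∨ x / β ≤ qgDigit m β x + 1 := by
  rcases min_choice (m - 1) (⌈x / β⌉₊ - 1) with h | h
  · exact .inl h
  · right
    rw [qgDigit, h, Nat.cast_sub (Nat.ceil_pos.2 hx), Nat.cast_one, sub_add_cancel]
    exact Nat.le_ceil _

lemma mapsTo_qgShift (hβ0 : 0 < β) (hβ1 : β < 1) (hmβ : 1 ≤ m * β) :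
    Set.MapsTo (qgShift m β) (Set.Ioc 0 ((m - 1) * β / (1 - β)))
      (Set.Ioc 0 ((m - 1) * β / (1 - β))) := by
  rintro x ⟨hx0, hxM⟩
  have hxβ : 0 < x / β := div_pos hx0 hβ0
  have h1β : 0 < 1 - β := sub_pos.2 hβ1
  refine ⟨sub_pos.2 (cast_qgDigit_lt hxβ), ?_⟩
  rcases qgDigit_eq_or_le (m := m) hxβ with h | h
  · have hm : 1 ≤ m := by
      by_contra! h0
      simp [Nat.lt_one_iff.1 h0] at hmβ
      linarith
    have : x / β ≤ (m - 1) / (1 - β) := by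
      rw [div_le_iff₀ hβ0]
      calc x ≤ (m - 1) * β / (1 - β) := hxM
        _ = (m - 1) / (1 - β) * β := by ring
    rw [qgShift, h, Nat.cast_sub hm, Nat.cast_one]
    calc x / β - (m - 1) ≤ (m - 1) / (1 - β) - (m - 1) := by linarith
      _ = (m - 1) * β / (1 - β) := by field_simp; ring
  · have : 1 ≤ (m - 1) * β / (1 - β) := by rw [le_div_iff₀ h1β]; linarith
    rw [qgShift]
    linarith

lemma sum_qgDigits_add (hβ0 : β ≠ 0) (k : ℕ) :
    ∑ j ∈ range k, (qgDigits m β x j : ℝ) * β ^ (j + 1) + β ^ k * (qgShift m β)^[k] x = x := by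
  induction k with
  | zero => simp
  | succ k ih =>
    have hstep : β ^ (k + 1) * ((qgShift m β)^[k] x / β) = β ^ k * (qgShift m β)^[k] x := by
      rw [pow_succ]
      field_simp
    rw [sum_range_succ, Function.iterate_succ_apply', qgShift, qgDigits]
    linear_combination ih + hstep

lemma exists_infinite_expansion (hβ0 : 0 < β) (hβ1 : β < 1) (hmβ : 1 ≤ m * β) (hx0 : 0 < x)
    (hxM : x ≤ (m - 1) * β / (1 - β)) :
    ∃ f : ℕ → ℕ, (∀ n, f n < m) ∧ expVal β f = x ∧ IsInfiniteExp f := by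
  have hm : 0 < m := Nat.pos_of_ne_zero fun h => by simp [h] at hmβ; linarith
  have horbit (k : ℕ) := (mapsTo_qgShift hβ0 hβ1 hmβ).iterate k ⟨hx0, hxM⟩
  have hsums (k : ℕ) := sum_qgDigits_add (m := m) (x := x) hβ0.ne' k
  have hrem : Tendsto (fun k => β ^ k * (qgShift m β)^[k] x) atTop (𝓝 0) := by
    refine squeeze_zero (fun k => by have := (horbit k).1; positivity)
      (fun k => mul_le_mul_of_nonneg_left (horbit k).2 (by positivity)) ?_
    simpa using (tendsto_pow_atTop_nhds_zero_of_lt_one hβ0.le hβ1).mul_const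
      ((m - 1) * β / (1 - β))
  have hsum : HasSum (fun j => (qgDigits m β x j : ℝ) * β ^ (j + 1)) x := by
    refine (hasSum_iff_tendsto_nat_of_nonneg (fun j => by positivity) x).2 ?_
    rw [funext fun k => eq_sub_of_add_eq (hsums k)]
    simpa using (tendsto_const_nhds (x := x)).sub hrem
  refine ⟨qgDigits m β x, fun n => qgDigit_lt hm, hsum.tsum_eq, fun n => ?_⟩
  by_contra! hzero
  have hfin := hsum.unique (hasSum_sum_of_ne_finset_zero (s := range n) fun j hj => by
    rw [hzero j (by simpa using hj), Nat.cast_zero, zero_mul])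
  have := (horbit n).1
  have : 0 < β ^ n * (qgShift m β)^[n] x := by positivity
  linarith [hsums n]

end QuasiGreedyAlgorithm

section QuasiGreedy

variable {m : ℕ} {β : ℝ} {δ e : ℕ → ℕ}

lemma exists_lexLt_of_lexLt_of_expVal_lt (hβ0 : 0 < β) (hβ1 : β < 1) (hmβ : 1 ≤ m * β)
    (hδ : IsExpansionOf1 m β δ) (he : ∀ n, e n < m) (he1 : expVal β e < 1)
    (hδe : LexLt δ e) : ∃ e', IsExpansionOf1 m β e' ∧ IsInfiniteExp e' ∧ LexLt δ e' := by
  obtain ⟨hδm, hδ1 : expVal β δ = 1⟩ := hδ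
  obtain ⟨n, hpre, hn⟩ := hδe
  set Pδ := ∑ k ∈ range (n + 1), (δ k : ℝ) * β ^ (k + 1)
  set Pe := ∑ k ∈ range (n + 1), (e k : ℝ) * β ^ (k + 1)
  have hβn : 0 < β ^ (n + 1) := pow_pos hβ0 _
  have hPe : Pe < 1 := (sum_le_expVal hβ0.le hβ1 he _).trans_lt he1
  have hP : Pδ ≤ Pe := sum_le_sum fun k hk => by
    gcongr
    rcases (Nat.lt_succ_iff.1 (mem_range.1 hk)).lt_or_eq with hk | rfl
    exacts [(hpre k hk).le, hn.le]
  have htail : 1 - Pδ ≤ β ^ (n + 1) * ((m - 1) * β / (1 - β)) := by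
    have hsplit := expVal_eq_sum_add_shift hβ0.le hβ1 hδm (n + 1)
    have hshift := expVal_le hβ0.le hβ1 fun k => hδm (k + (n + 1))
    have := mul_le_mul_of_nonneg_left hshift hβn.le
    linarith
  obtain ⟨f, hfm, hf, hfinf⟩ := exists_infinite_expansion hβ0 hβ1 hmβ
    (div_pos (sub_pos.2 hPe) hβn) (by rw [div_le_iff₀' hβn]; linarith)
  refine ⟨splice e (n + 1) f, ⟨splice_lt he hfm (n + 1), ?_⟩, fun j => ?_, n, fun k hk => ?_, ?_⟩
  · show expVal β _ = 1
    rw [expVal_splice hβ0.le hβ1 he hfm, hf, mul_div_cancel₀ _ hβn.ne']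
    ring
  · obtain ⟨k, hk, hk0⟩ := hfinf j
    exact ⟨k + (n + 1), by omega, by rwa [splice_add]⟩
  · rw [splice_of_lt (by omega)]
    exact hpre k hk
  · rwa [splice_of_lt n.lt_succ_self]

theorem IsQuasiGreedy.lexLt_of_expVal_lt (hβ0 : 0 < β) (hβ1 : β < 1) (hmβ : 1 ≤ m * β)
    (hδ : IsQuasiGreedy m β δ) (he : ∀ n, e n < m) (he1 : expVal β e < 1) : LexLt e δ := by
  rcases lt_trichotomy (toLex e) (toLex δ) with h | h | h
  · exact h
  · have hδ1 : expVal β δ = 1 := hδ.1.2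
    rw [toLex_inj.1 h] at he1
    linarith
  · obtain ⟨e', he', he'inf, hδe'⟩ := exists_lexLt_of_lexLt_of_expVal_lt hβ0 hβ1 hmβ hδ.1 he he1 h
    exact absurd hδe' (hδ.2.2 e' he' he'inf).not_lexLt

end QuasiGreedy

/-- the quasi-greedy expansion of 1 is strictly decreasing in β. -/
theorem stmt9 (m : ℕ) (hm : 2 ≤ m) (β β' : ℝ)
    (hβ : 1 / (m : ℝ) < β) (hββ' : β < β') (hβ' : β' < 1)
    (δ δ' : ℕ → ℕ)
    (hδ : IsQuasiGreedy m β δ) (hδ' : IsQuasiGreedy m β' δ') :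
    LexLt δ' δ := by
  have hm0 : (0 : ℝ) < m := by exact_mod_cast (by omega : 0 < m)
  have hβ0 : 0 < β := (one_div_pos.2 hm0).trans hβ
  have hmβ : 1 ≤ (m : ℝ) * β := by
    rw [div_lt_iff₀ hm0] at hβ
    linarith
  obtain ⟨⟨hδ'm, hδ'1⟩, hδ'inf, -⟩ := hδ'
  obtain ⟨k, -, hk⟩ := hδ'inf 0
  refine hδ.lexLt_of_expVal_lt hβ0 (hββ'.trans hβ') hmβ hδ'm ?_
  calc expVal β δ' < expVal β' δ' := expVal_lt_expVal hβ0 hββ' hβ' hδ'm hk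
    _ = 1 := hδ'1
end

section
/- Let m = 2q be even with q ≥ 1, and define λ_ℓ = q − 1 + τ_ℓ for ℓ ≥ 1, where (τ_ℓ)_{ℓ≥0} is the Thue–Morse sequence. Then for all k ≥ 1: λ_{k+1}λ_{k+2}… < λ_1λ_2… and (m−1−λ_{k+1})(m−1−λ_{k+2})… < λ_1λ_2… in lexicographical order. -/
section Stmt11Aux

variable (τ : ℕ → ℕ)

lemma stmt11_tbin (hτ0 : τ 0 = 0) (hτe : ∀ ℓ, τ (2 * ℓ) = τ ℓ)
    (hτo : ∀ ℓ, τ (2 * ℓ + 1) = 1 - τ ℓ) : ∀ ℓ, τ ℓ ≤ 1 := by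
  intro ℓ
  induction ℓ using Nat.strong_induction_on with
  | _ ℓ ih =>
    rcases Nat.even_or_odd ℓ with ⟨m, hm⟩ | ⟨m, hm⟩
    · rcases Nat.eq_zero_or_pos m with h0 | hpos
      · have : ℓ = 0 := by omega
        rw [this, hτ0]; omega
      · have : ℓ = 2 * m := by omega
        rw [this, hτe]; exact ih m (by omega)
    · have : ℓ = 2 * m + 1 := by omega
      rw [this, hτo]; omega

lemma stmt11_t1 (hτ0 : τ 0 = 0) (hτo : ∀ ℓ, τ (2 * ℓ + 1) = 1 - τ ℓ) : τ 1 = 1 := by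
  have := hτo 0
  simpa [hτ0] using this

lemma stmt11_t2 (hτ0 : τ 0 = 0) (hτe : ∀ ℓ, τ (2 * ℓ) = τ ℓ)
    (hτo : ∀ ℓ, τ (2 * ℓ + 1) = 1 - τ ℓ) : τ 2 = 1 := by
  have := hτe 1
  rw [show 2 * 1 = 2 from rfl] at this
  rw [this, stmt11_t1 τ hτ0 hτo]

/-- R property: first difference between σ^i τ and τ is either at 0,
or at a position where σ^i τ has value 0. -/
lemma stmt11_R (hτ0 : τ 0 = 0) (hτe : ∀ ℓ, τ (2 * ℓ) = τ ℓ)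
    (hτo : ∀ ℓ, τ (2 * ℓ + 1) = 1 - τ ℓ) :
    ∀ i, 1 ≤ i → ∃ r, (∀ u, u < r → τ (u + i) = τ u) ∧ τ (r + i) ≠ τ r ∧
      (r = 0 ∨ τ (r + i) = 0) := by
  have hb := stmt11_tbin τ hτ0 hτe hτo
  have h1 := stmt11_t1 τ hτ0 hτo
  have h2 := stmt11_t2 τ hτ0 hτe hτo
  intro i
  induction i using Nat.strong_induction_on with
  | _ i ih =>
    intro hi
    rcases Nat.even_or_odd i with ⟨h, hh⟩ | ⟨h, hh⟩
    · -- i = 2h, h ≥ 1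
      have hi2 : i = 2 * h := by omega
      subst hi2
      obtain ⟨r, e1, e2, e3⟩ := ih h (by omega) (by omega)
      refine ⟨2 * r, ?_, ?_, ?_⟩
      · intro u hu
        rcases Nat.even_or_odd u with ⟨v, hv⟩ | ⟨v, hv⟩
        · rw [show u + 2 * h = 2 * (v + h) from by omega, hτe,
            show u = 2 * v from by omega, hτe]
          exact e1 v (by omega)
        · rw [show u + 2 * h = 2 * (v + h) + 1 from by omega, hτo,
            e1 v (by omega), show u = 2 * v + 1 from by omega, hτo]
      · rw [show 2 * r + 2 * h = 2 * (r + h) from by omega, hτe, hτe]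
        exact e2
      · rcases e3 with e3 | e3
        · left; omega
        · right
          rw [show 2 * r + 2 * h = 2 * (r + h) from by omega, hτe]
          exact e3
    · -- i = 2h + 1
      have hi2 : i = 2 * h + 1 := by omega
      subst hi2
      by_cases hth : τ h = 0
      · refine ⟨0, by simp, ?_, Or.inl rfl⟩
        rw [show 0 + (2 * h + 1) = 2 * h + 1 from by omega, hτo, hth, hτ0]
        omega
      · have hth1 : τ h = 1 := by have := hb h; omega
        by_cases hth2 : τ (h + 1) = 0
        · refine ⟨1, ?_, ?_, Or.inr ?_⟩
          · intro u hu
            have hu0 : u = 0 := by omega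
            subst hu0
            rw [show 0 + (2 * h + 1) = 2 * h + 1 from by omega, hτo, hth1, hτ0]
          · rw [show 1 + (2 * h + 1) = 2 * (h + 1) from by omega, hτe, hth2, h1]
            omega
          · rw [show 1 + (2 * h + 1) = 2 * (h + 1) from by omega, hτe]
            exact hth2
        · have hth2' : τ (h + 1) = 1 := by have := hb (h + 1); omega
          refine ⟨2, ?_, ?_, Or.inr ?_⟩
          · intro u hu
            interval_cases u
            · rw [show 0 + (2 * h + 1) = 2 * h + 1 from by omega, hτo, hth1, hτ0]
            · rw [show 1 + (2 * h + 1) = 2 * (h + 1) from by omega, hτe, hth2', h1]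
          · rw [show 2 + (2 * h + 1) = 2 * (h + 1) + 1 from by omega, hτo, hth2', h2]
            omega
          · rw [show 2 + (2 * h + 1) = 2 * (h + 1) + 1 from by omega, hτo, hth2']

/-- S property: first agreement between σ^i τ and τ is either at 0,
or at a position where τ has value 1. -/
lemma stmt11_S (hτ0 : τ 0 = 0) (hτe : ∀ ℓ, τ (2 * ℓ) = τ ℓ)
    (hτo : ∀ ℓ, τ (2 * ℓ + 1) = 1 - τ ℓ) :
    ∀ i, 1 ≤ i → ∃ r, (∀ u, u < r → τ (u + i) ≠ τ u) ∧ τ (r + i) = τ r ∧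
      (r = 0 ∨ τ r = 1) := by
  have hb := stmt11_tbin τ hτ0 hτe hτo
  have h1 := stmt11_t1 τ hτ0 hτo
  have h2 := stmt11_t2 τ hτ0 hτe hτo
  intro i
  induction i using Nat.strong_induction_on with
  | _ i ih =>
    intro hi
    rcases Nat.even_or_odd i with ⟨h, hh⟩ | ⟨h, hh⟩
    · -- i = 2h, h ≥ 1
      have hi2 : i = 2 * h := by omega
      subst hi2
      obtain ⟨r, e1, e2, e3⟩ := ih h (by omega) (by omega)
      refine ⟨2 * r, ?_, ?_, ?_⟩
      · intro u hu
        rcases Nat.even_or_odd u with ⟨v, hv⟩ | ⟨v, hv⟩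
        · rw [show u + 2 * h = 2 * (v + h) from by omega, hτe,
            show u = 2 * v from by omega, hτe]
          exact e1 v (by omega)
        · rw [show u + 2 * h = 2 * (v + h) + 1 from by omega, hτo,
            show u = 2 * v + 1 from by omega, hτo]
          have := e1 v (by omega)
          have := hb (v + h); have := hb v
          omega
      · rw [show 2 * r + 2 * h = 2 * (r + h) from by omega, hτe, hτe]
        exact e2
      · rcases e3 with e3 | e3
        · left; omega
        · right
          rw [show 2 * r = 2 * r from rfl, hτe]
          exact e3
    · -- i = 2h + 1
      have hi2 : i = 2 * h + 1 := by omega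
      subst hi2
      by_cases hth : τ h = 1
      · refine ⟨0, by simp, ?_, Or.inl rfl⟩
        rw [show 0 + (2 * h + 1) = 2 * h + 1 from by omega, hτo, hth, hτ0]
      · have hth0 : τ h = 0 := by have := hb h; omega
        by_cases hth2 : τ (h + 1) = 1
        · refine ⟨1, ?_, ?_, Or.inr h1⟩
          · intro u hu
            have hu0 : u = 0 := by omega
            subst hu0
            rw [show 0 + (2 * h + 1) = 2 * h + 1 from by omega, hτo, hth0, hτ0]
            omega
          · rw [show 1 + (2 * h + 1) = 2 * (h + 1) from by omega, hτe, hth2, h1]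
        · have hth2' : τ (h + 1) = 0 := by have := hb (h + 1); omega
          refine ⟨2, ?_, ?_, Or.inr h2⟩
          · intro u hu
            interval_cases u
            · rw [show 0 + (2 * h + 1) = 2 * h + 1 from by omega, hτo, hth0, hτ0]
              omega
            · rw [show 1 + (2 * h + 1) = 2 * (h + 1) from by omega, hτe, hth2', h1]
              omega
          · rw [show 2 + (2 * h + 1) = 2 * (h + 1) + 1 from by omega, hτo, hth2', h2]

lemma stmt11_lexA (hτ0 : τ 0 = 0) (hτe : ∀ ℓ, τ (2 * ℓ) = τ ℓ)
    (hτo : ∀ ℓ, τ (2 * ℓ + 1) = 1 - τ ℓ) :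
    ∀ k, 1 ≤ k → LexLt (fun n => τ (n + 1 + k)) (fun n => τ (n + 1)) := by
  have hb := stmt11_tbin τ hτ0 hτe hτo
  have h1 := stmt11_t1 τ hτ0 hτo
  have h2 := stmt11_t2 τ hτ0 hτe hτo
  intro k hk
  rcases Nat.even_or_odd (k + 1) with ⟨i, hi⟩ | ⟨i, hi⟩
  · -- k + 1 = 2i
    by_cases hti : τ i = 0
    · refine ⟨0, by simp, ?_⟩
      show τ (0 + 1 + k) < τ (0 + 1)
      rw [show 0 + 1 + k = 2 * i from by omega, hτe, hti,
        show (0 + 1 : ℕ) = 1 from rfl, h1]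
      omega
    · have hti1 : τ i = 1 := by have := hb i; omega
      refine ⟨1, ?_, ?_⟩
      · intro m hm
        have hm0 : m = 0 := by omega
        subst hm0
        show τ (0 + 1 + k) = τ (0 + 1)
        rw [show 0 + 1 + k = 2 * i from by omega, hτe, hti1,
          show (0 + 1 : ℕ) = 1 from rfl, h1]
      · show τ (1 + 1 + k) < τ (1 + 1)
        rw [show 1 + 1 + k = 2 * i + 1 from by omega, hτo, hti1,
          show (1 + 1 : ℕ) = 2 from rfl, h2]
        omega
  · -- k + 1 = 2i + 1, so k = 2i with i ≥ 1
    have hi1 : 1 ≤ i := by omega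
    obtain ⟨r, e1, e2, e3⟩ := stmt11_R τ hτ0 hτe hτo i hi1
    rcases e3 with rfl | e3
    · -- r = 0 : τ i ≠ τ 0 = 0, so τ i = 1
      rw [hτ0] at e2
      have hti1 : τ (0 + i) = 1 := by have := hb (0 + i); omega
      refine ⟨0, by simp, ?_⟩
      show τ (0 + 1 + k) < τ (0 + 1)
      rw [show 0 + 1 + k = 2 * i + 1 from by omega, hτo,
        show (0 + 1 : ℕ) = 1 from rfl, h1, show i = 0 + i from by omega, hti1]
      omega
    · rcases Nat.eq_zero_or_pos r with rfl | hr
      · rw [hτ0] at e2; omega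
      · refine ⟨2 * r - 1, ?_, ?_⟩
        · intro m hm
          rcases Nat.even_or_odd m with ⟨u, hu⟩ | ⟨u, hu⟩
          · show τ (m + 1 + k) = τ (m + 1)
            rw [show m + 1 + k = 2 * (u + i) + 1 from by omega, hτo,
              e1 u (by omega), show m + 1 = 2 * u + 1 from by omega, hτo]
          · show τ (m + 1 + k) = τ (m + 1)
            rw [show m + 1 + k = 2 * (u + 1 + i) from by omega, hτe,
              e1 (u + 1) (by omega), show m + 1 = 2 * (u + 1) from by omega, hτe]
        · show τ (2 * r - 1 + 1 + k) < τ (2 * r - 1 + 1)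
          rw [show 2 * r - 1 + 1 + k = 2 * (r + i) from by omega, hτe,
            show 2 * r - 1 + 1 = 2 * r from by omega, hτe]
          have := hb r
          omega

lemma stmt11_lexB (hτ0 : τ 0 = 0) (hτe : ∀ ℓ, τ (2 * ℓ) = τ ℓ)
    (hτo : ∀ ℓ, τ (2 * ℓ + 1) = 1 - τ ℓ) :
    ∀ k, 1 ≤ k → LexLt (fun n => 1 - τ (n + 1 + k)) (fun n => τ (n + 1)) := by
  have hb := stmt11_tbin τ hτ0 hτe hτo
  have h1 := stmt11_t1 τ hτ0 hτo
  have h2 := stmt11_t2 τ hτ0 hτe hτo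
  intro k hk
  rcases Nat.even_or_odd (k + 1) with ⟨i, hi⟩ | ⟨i, hi⟩
  · -- k + 1 = 2i
    by_cases hti : τ i = 1
    · refine ⟨0, by simp, ?_⟩
      show 1 - τ (0 + 1 + k) < τ (0 + 1)
      rw [show 0 + 1 + k = 2 * i from by omega, hτe, hti,
        show (0 + 1 : ℕ) = 1 from rfl, h1]
      omega
    · have hti0 : τ i = 0 := by have := hb i; omega
      refine ⟨1, ?_, ?_⟩
      · intro m hm
        have hm0 : m = 0 := by omega
        subst hm0
        show 1 - τ (0 + 1 + k) = τ (0 + 1)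
        rw [show 0 + 1 + k = 2 * i from by omega, hτe, hti0,
          show (0 + 1 : ℕ) = 1 from rfl, h1]
      · show 1 - τ (1 + 1 + k) < τ (1 + 1)
        rw [show 1 + 1 + k = 2 * i + 1 from by omega, hτo, hti0,
          show (1 + 1 : ℕ) = 2 from rfl, h2]
        omega
  · -- k + 1 = 2i + 1, so k = 2i with i ≥ 1
    have hi1 : 1 ≤ i := by omega
    obtain ⟨r, e1, e2, e3⟩ := stmt11_S τ hτ0 hτe hτo i hi1
    rcases e3 with rfl | e3
    · -- r = 0 : τ i = τ 0 = 0
      rw [hτ0] at e2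
      refine ⟨0, by simp, ?_⟩
      show 1 - τ (0 + 1 + k) < τ (0 + 1)
      rw [show 0 + 1 + k = 2 * i + 1 from by omega, hτo,
        show (0 + 1 : ℕ) = 1 from rfl, h1, show i = 0 + i from by omega, e2]
      omega
    · rcases Nat.eq_zero_or_pos r with rfl | hr
      · rw [hτ0] at e3; omega
      · refine ⟨2 * r - 1, ?_, ?_⟩
        · intro m hm
          rcases Nat.even_or_odd m with ⟨u, hu⟩ | ⟨u, hu⟩
          · show 1 - τ (m + 1 + k) = τ (m + 1)
            rw [show m + 1 + k = 2 * (u + i) + 1 from by omega, hτo,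
              show m + 1 = 2 * u + 1 from by omega, hτo]
            have := e1 u (by omega)
            have := hb (u + i); have := hb u
            omega
          · show 1 - τ (m + 1 + k) = τ (m + 1)
            rw [show m + 1 + k = 2 * (u + 1 + i) from by omega, hτe,
              show m + 1 = 2 * (u + 1) from by omega, hτe]
            have := e1 (u + 1) (by omega)
            have := hb (u + 1 + i); have := hb (u + 1)
            omega
        · show 1 - τ (2 * r - 1 + 1 + k) < τ (2 * r - 1 + 1)
          rw [show 2 * r - 1 + 1 + k = 2 * (r + i) from by omega, hτe,
            show 2 * r - 1 + 1 = 2 * r from by omega, hτe]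
          omega

end Stmt11Aux

/-- for even m = 2q, the sequence λ_ℓ = q−1+τ_ℓ (τ the
Thue–Morse sequence) satisfies σ^k(λ) < λ and σ^k(λ̄) < λ for all k ≥ 1. -/
theorem stmt11 (q : ℕ) (hq : 1 ≤ q) (τ : ℕ → ℕ)
    (hτ0 : τ 0 = 0) (hτe : ∀ ℓ, τ (2 * ℓ) = τ ℓ) (hτo : ∀ ℓ, τ (2 * ℓ + 1) = 1 - τ ℓ) :
    ∀ k, 1 ≤ k →
      LexLt (fun n => q - 1 + τ (n + 1 + k)) (fun n => q - 1 + τ (n + 1)) ∧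
      LexLt (fun n => (2 * q - 1) - (q - 1 + τ (n + 1 + k)))
        (fun n => q - 1 + τ (n + 1)) := by
  have hb := stmt11_tbin τ hτ0 hτe hτo
  intro k hk
  constructor
  · obtain ⟨n, he, hl⟩ := stmt11_lexA τ hτ0 hτe hτo k hk
    refine ⟨n, ?_, ?_⟩
    · intro m hm
      have h3 : τ (m + 1 + k) = τ (m + 1) := he m hm
      show q - 1 + τ (m + 1 + k) = q - 1 + τ (m + 1)
      omega
    · have h3 : τ (n + 1 + k) < τ (n + 1) := hl
      show q - 1 + τ (n + 1 + k) < q - 1 + τ (n + 1)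
      omega
  · obtain ⟨n, he, hl⟩ := stmt11_lexB τ hτ0 hτe hτo k hk
    refine ⟨n, ?_, ?_⟩
    · intro m hm
      have h3 : 1 - τ (m + 1 + k) = τ (m + 1) := he m hm
      have := hb (m + 1 + k)
      have := hb (m + 1)
      show (2 * q - 1) - (q - 1 + τ (m + 1 + k)) = q - 1 + τ (m + 1)
      omega
    · have h3 : 1 - τ (n + 1 + k) < τ (n + 1) := hl
      have := hb (n + 1 + k)
      have := hb (n + 1)
      show (2 * q - 1) - (q - 1 + τ (n + 1 + k)) < q - 1 + τ (n + 1)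
      omega
end

section
/- Let m = 2q+1 be odd with q ≥ 1, and define λ_ℓ = q + τ_ℓ − τ_{ℓ-1} for ℓ ≥ 1, where (τ_ℓ)_{ℓ≥0} is the Thue–Morse sequence. Then for all k ≥ 1: λ_{k+1}λ_{k+2}… < λ_1λ_2… and (m−1−λ_{k+1})(m−1−λ_{k+2})… < λ_1λ_2… in lexicographical order. -/
section Aux

variable {τ : ℕ → ℕ} (hτ0 : τ 0 = 0) (hτe : ∀ ℓ, τ (2 * ℓ) = τ ℓ)
  (hτo : ∀ ℓ, τ (2 * ℓ + 1) = 1 - τ ℓ)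

include hτ0 hτe hτo

lemma tau_le_one : ∀ n, τ n ≤ 1 := by
  intro n
  induction n using Nat.strong_induction_on with
  | _ n ih =>
    match n, ih with
    | 0, _ => simp [hτ0]
    | n + 1, ih =>
      rcases Nat.even_or_odd (n + 1) with ⟨i, hi⟩ | ⟨i, hi⟩
      · rw [show n + 1 = 2 * i by omega, hτe]
        exact ih i (by omega)
      · rw [hi, hτo]
        omega

lemma tau_one : τ 1 = 1 := by
  have h := hτo 0
  rw [hτ0] at h
  simpa using h

lemma key : ∀ k, 1 ≤ k → ∃ n, τ n = 1 ∧ τ (n + k) = τ k ∧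
    ∀ m < n, (τ (m + k) + τ k) % 2 = τ m := by
  intro k
  induction k using Nat.strong_induction_on with
  | _ k ih =>
    intro hk
    rcases Nat.even_or_odd k with ⟨j, hj0⟩ | ⟨j, hj⟩
    · -- k = 2 * j, j ≥ 1
      have hj : k = 2 * j := by omega
      have hj1 : 1 ≤ j := by omega
      obtain ⟨n, hn1, hn2, hn3⟩ := ih j (by omega) hj1
      have hτk : τ k = τ j := by rw [hj, hτe]
      refine ⟨2 * n, by rw [hτe, hn1], ?_, ?_⟩
      · have h : τ (2 * n + k) = τ (n + j) := by
          rw [show 2 * n + k = 2 * (n + j) by omega, hτe]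
        rw [h, hn2, hτk]
      · intro m hm
        rcases Nat.even_or_odd m with ⟨i, hi0⟩ | ⟨i, hi⟩
        · have hi : m = 2 * i := by omega
          have g1 : τ (m + k) = τ (i + j) := by
            rw [show m + k = 2 * (i + j) by omega, hτe]
          have g2 : τ m = τ i := by rw [hi, hτe]
          rw [g1, g2, hτk]
          exact hn3 i (by omega)
        · have g1 : τ (m + k) = 1 - τ (i + j) := by
            rw [show m + k = 2 * (i + j) + 1 by omega, hτo]
          have g2 : τ m = 1 - τ i := by rw [hi, hτo]
          have b1 := tau_le_one hτ0 hτe hτo (i + j)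
          have b2 := tau_le_one hτ0 hτe hτo j
          have b3 := tau_le_one hτ0 hτe hτo i
          have h4 := hn3 i (by omega)
          rw [g1, g2, hτk]
          omega
    · -- k = 2 * j + 1
      have hτk : τ k = 1 - τ j := by rw [hj, hτo]
      have h1k : τ (1 + k) = τ (j + 1) := by
        rw [show 1 + k = 2 * (j + 1) by omega, hτe]
      have bj := tau_le_one hτ0 hτe hτo j
      have bj1 := tau_le_one hτ0 hτe hτo (j + 1)
      have ht1 : τ 1 = 1 := tau_one hτ0 hτe hτo
      by_cases hc : τ (j + 1) = τ j
      · refine ⟨2, ?_, ?_, ?_⟩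
        · rw [show (2 : ℕ) = 2 * 1 by norm_num, hτe, ht1]
        · have h : τ (2 + k) = 1 - τ (j + 1) := by
            rw [show 2 + k = 2 * (j + 1) + 1 by omega, hτo]
          rw [h, hτk]
          omega
        · intro m hm
          interval_cases m
          · rw [Nat.zero_add, hτ0]
            omega
          · rw [h1k, hτk, ht1]
            omega
      · refine ⟨1, ht1, ?_, ?_⟩
        · rw [h1k, hτk]
          omega
        · intro m hm
          interval_cases m
          rw [Nat.zero_add, hτ0]
          omega

end Aux

/-- for odd m = 2q+1, the sequence λ_ℓ = q + τ_ℓ − τ_{ℓ−1}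
(τ the Thue–Morse sequence) satisfies σ^k(λ) < λ and σ^k(λ̄) < λ for k ≥ 1. -/
theorem stmt12 (q : ℕ) (hq : 1 ≤ q) (τ : ℕ → ℕ)
    (hτ0 : τ 0 = 0) (hτe : ∀ ℓ, τ (2 * ℓ) = τ ℓ) (hτo : ∀ ℓ, τ (2 * ℓ + 1) = 1 - τ ℓ) :
    ∀ k, 1 ≤ k →
      LexLt (fun n => q + τ (n + 1 + k) - τ (n + k)) (fun n => q + τ (n + 1) - τ n) ∧
      LexLt (fun n => 2 * q - (q + τ (n + 1 + k) - τ (n + k)))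
        (fun n => q + τ (n + 1) - τ n) := by
  intro k hk
  obtain ⟨n, hn1, hn2, hn3⟩ := key hτ0 hτe hτo k hk
  have bτ := tau_le_one hτ0 hτe hτo
  have ht1 : τ 1 = 1 := tau_one hτ0 hτe hτo
  have hn0 : 1 ≤ n := by
    rcases Nat.eq_zero_or_pos n with h | h
    · rw [h, hτ0] at hn1; omega
    · exact h
  obtain ⟨N, rfl⟩ : ∃ N, n = N + 1 := ⟨n - 1, by omega⟩
  rcases Nat.lt_or_ge (τ k) 1 with hτk | hτk
  · -- τ k = 0
    have hτk0 : τ k = 0 := by omega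
    have heq : ∀ m < N + 1, τ (m + k) = τ m := by
      intro m hm
      have h1 := hn3 m hm
      have h2 := bτ (m + k)
      rw [hτk0] at h1
      omega
    constructor
    · refine ⟨N, ?_, ?_⟩
      · intro m hm
        simp only []
        rw [heq (m + 1) (by omega), heq m (by omega)]
      · simp only []
        have e1 : τ (N + 1 + k) = 0 := by rw [hn2, hτk0]
        have e2 : τ (N + k) = τ N := heq N (by omega)
        have e3 : τ (N + 1) = 1 := hn1
        have e4 := bτ N
        omega
    · refine ⟨0, fun m hm => absurd hm (Nat.not_lt_zero m), ?_⟩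
      simp only []
      have e1 : τ (0 + 1 + k) ≤ 1 := bτ _
      have e2 : τ (0 + k) = τ k := by rw [Nat.zero_add]
      have e3 : τ (0 + 1) = 1 := by rw [Nat.zero_add, ht1]
      omega
  · -- τ k = 1
    have hτk1 : τ k = 1 := by
      have := bτ k
      omega
    have heq : ∀ m < N + 1, τ (m + k) + τ m = 1 := by
      intro m hm
      have h1 := hn3 m hm
      have h2 := bτ (m + k)
      have h3 := bτ m
      rw [hτk1] at h1
      omega
    constructor
    · refine ⟨0, fun m hm => absurd hm (Nat.not_lt_zero m), ?_⟩
      simp only []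
      have e1 : τ (0 + 1 + k) ≤ 1 := bτ _
      have e2 : τ (0 + k) = 1 := by rw [Nat.zero_add, hτk1]
      have e3 : τ (0 + 1) = 1 := by rw [Nat.zero_add, ht1]
      omega
    · refine ⟨N, ?_, ?_⟩
      · intro m hm
        simp only []
        have e1 := heq (m + 1) (by omega)
        have e2 := heq m (by omega)
        have b1 := bτ (m + 1 + k)
        have b2 := bτ (m + k)
        have b3 := bτ (m + 1)
        have b4 := bτ m
        omega
      · simp only []
        have e1 : τ (N + 1 + k) = 1 := by rw [hn2, hτk1]
        have e2 := heq N (by omega)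
        have b1 := bτ (N + k)
        have b2 := bτ N
        have e3 : τ (N + 1) = 1 := hn1
        omega
end

section
/- Fix N ≥ 2 and let (λ_ℓ) be the Komornik–Loreti sequence for digit set {0,…,2N−2} (λ_1 = N, λ_{2^{n+1}} = 2N−1−λ_{2^n}, λ_{2^n+ℓ} = 2N−2−λ_ℓ for 1 ≤ ℓ < 2^n). Then for every n ≥ 2 and every k ∈ {2,…,2^n−1}, the block λ_k…λ_{k+2^n−2} is strictly smaller than λ_1…λ_{2^n−1} in the lexicographical order; moreover for every k ∈ {1,…,2^n−1}, the reflected block (2N−2−λ_k)…(2N−2−λ_{k+2^n−2}) is strictly smaller than λ_1…λ_{2^n−1}. -/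
/-- Strict lexicographic order on blocks of length `len`. -/
def BlockLt (a b : ℕ → ℕ) (len : ℕ) : Prop :=
  ∃ i < len, (∀ j < i, a j = b j) ∧ a i < b i

/-- λ_k…λ_{k+2^n−2} < λ_1…λ_{2^n−1} for 2 ≤ k ≤ 2^n−1, and
(2N−2−λ_k)…(2N−2−λ_{k+2^n−2}) < λ_1…λ_{2^n−1} for 1 ≤ k ≤ 2^n−1. -/
theorem stmt14 (N : ℕ) (hN : 2 ≤ N) (lam : ℕ → ℕ)
    (h1 : lam 1 = N)
    (h2 : ∀ n : ℕ, lam (2 ^ (n + 1)) = 2 * N - 1 - lam (2 ^ n))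
    (h3 : ∀ n : ℕ, 1 ≤ n → ∀ ℓ, 1 ≤ ℓ → ℓ < 2 ^ n → lam (2 ^ n + ℓ) = 2 * N - 2 - lam ℓ) :
    ∀ n : ℕ, 2 ≤ n →
      (∀ k, 2 ≤ k → k ≤ 2 ^ n - 1 →
        BlockLt (fun i => lam (k + i)) (fun i => lam (1 + i)) (2 ^ n - 1)) ∧
      (∀ k, 1 ≤ k → k ≤ 2 ^ n - 1 →
        BlockLt (fun i => 2 * N - 2 - lam (k + i)) (fun i => lam (1 + i)) (2 ^ n - 1)) := by
  have hpow : ∀ m : ℕ, lam (2 ^ m) = N ∨ lam (2 ^ m) = N - 1 := by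
    intro m
    induction m with
    | zero => left; simpa using h1
    | succ m ih => rw [h2 m]; rcases ih with h | h <;> rw [h] <;> omega
  have hub : ∀ ℓ, 1 ≤ ℓ → lam ℓ ≤ 2 * N - 2 := by
    intro ℓ
    induction ℓ using Nat.strong_induction_on with
    | _ ℓ ih =>
      intro hℓ
      have h2m : 2 ^ Nat.log 2 ℓ ≤ ℓ := Nat.pow_log_le_self 2 (by omega)
      have hlt : ℓ < 2 ^ (Nat.log 2 ℓ + 1) := Nat.lt_pow_succ_log_self (by norm_num) ℓ
      rcases eq_or_lt_of_le h2m with he | hgt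
      · rw [← he]; rcases hpow (Nat.log 2 ℓ) with h | h <;> omega
      · have hm : 1 ≤ Nat.log 2 ℓ := by
          by_contra h
          have h0 : Nat.log 2 ℓ = 0 := by omega
          rw [h0] at hgt hlt; norm_num at hgt hlt; omega
        have hps : (2:ℕ) ^ (Nat.log 2 ℓ + 1) = 2 ^ Nat.log 2 ℓ + 2 ^ Nat.log 2 ℓ := by
          rw [pow_succ]; ring
        rw [show ℓ = 2 ^ Nat.log 2 ℓ + (ℓ - 2 ^ Nat.log 2 ℓ) by omega,
          h3 (Nat.log 2 ℓ) hm _ (by omega) (by omega)]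
        omega
  have key : ∀ k : ℕ,
      (2 ≤ k → ∃ i, i < 2 ^ Nat.log 2 k ∧
        (∀ j < i, lam (k + j) = lam (1 + j)) ∧ lam (k + i) < lam (1 + i)) ∧
      (1 ≤ k → ∃ j, k + j ≤ 2 ^ (Nat.log 2 k + 1) ∧ (k = 2 ^ Nat.log 2 k → j = 0) ∧
        (∀ i < j, 2 * N - 2 - lam (k + i) = lam (1 + i)) ∧
        2 * N - 2 - lam (k + j) < lam (1 + j)) := by
    intro k
    induction k using Nat.strong_induction_on with
    | _ k ih =>
      rcases Nat.eq_zero_or_pos k with rfl | hk1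
      · exact ⟨by omega, by omega⟩
      have h2m : 2 ^ Nat.log 2 k ≤ k := Nat.pow_log_le_self 2 (by omega)
      have hlt2 : k < 2 ^ (Nat.log 2 k + 1) := Nat.lt_pow_succ_log_self (by norm_num) k
      set m := Nat.log 2 k with hm_def
      have hps : (2:ℕ) ^ (m + 1) = 2 ^ m + 2 ^ m := by rw [pow_succ]; ring
      have hL1 : (1:ℕ) ≤ 2 ^ m := Nat.one_le_two_pow
      have hpowm := hpow m
      have hubL : lam (2 ^ m) ≤ 2 * N - 2 := hub _ hL1
      rcases eq_or_lt_of_le h2m with he | hgt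
      -- ======== case k = 2^m ========
      · constructor
        · intro hk2
          have hm1 : 1 ≤ m := by
            rcases Nat.eq_zero_or_pos m with h0 | h
            · exfalso; rw [h0] at he; norm_num at he; omega
            · exact h
          have h2le : (2:ℕ) ≤ 2 ^ m := by
            calc (2:ℕ) = 2 ^ 1 := by norm_num
            _ ≤ 2 ^ m := Nat.pow_le_pow_right (by norm_num) hm1
          rcases hpowm with hNv | hNv
          · refine ⟨1, by omega, ?_, ?_⟩
            · intro j hj
              have hj0 : j = 0 := by omega
              subst hj0
              have e1 : lam (k + 0) = lam (2 ^ m) := by rw [Nat.add_zero, ← he]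
              have e2 : lam (1 + 0) = lam 1 := rfl
              omega
            · have e1 : lam (k + 1) = 2 * N - 2 - lam 1 := by
                rw [← he]; exact h3 m hm1 1 le_rfl (by omega)
              have e2 : lam (1 + 1) = 2 * N - 1 - lam 1 := by
                have e := h2 0
                norm_num at e
                rw [show (1:ℕ) + 1 = 2 by norm_num]
                exact e
              omega
          · refine ⟨0, by omega, by omega, ?_⟩
            have e1 : lam (k + 0) = lam (2 ^ m) := by rw [Nat.add_zero, ← he]
            have e2 : lam (1 + 0) = lam 1 := rfl
            omega
        · intro _
          refine ⟨0, by omega, fun _ => rfl, by omega, ?_⟩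
          have e1 : lam (k + 0) = lam (2 ^ m) := by rw [Nat.add_zero, ← he]
          have e2 : lam (1 + 0) = lam 1 := rfl
          omega
      -- ======== case 2^m < k < 2^(m+1) ========
      · have hm1 : 1 ≤ m := by
          rcases Nat.eq_zero_or_pos m with h0 | h
          · exfalso; rw [h0] at hgt hlt2; norm_num at hgt hlt2; omega
          · exact h
        set s := k - 2 ^ m with hs_def
        have hks : k = 2 ^ m + s := by omega
        have hs1 : 1 ≤ s := by omega
        have hsL : s < 2 ^ m := by omega
        have hF1 : ∀ ℓ, 1 ≤ ℓ → ℓ < 2 ^ m → lam (2 ^ m + ℓ) = 2 * N - 2 - lam ℓ := h3 m hm1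
        have hF2 : lam (2 ^ m + 2 ^ m) = 2 * N - 1 - lam (2 ^ m) := by
          have e := h2 m; rwa [hps] at e
        have hF3 : ∀ u, 1 ≤ u → u < 2 ^ m + 2 ^ m →
            lam (2 ^ m + 2 ^ m + u) = 2 * N - 2 - lam u := by
          intro u hu1 hu2
          have e := h3 (m + 1) (by omega) u hu1 (by omega)
          rwa [hps] at e
        have hnotpow : ¬ (k = 2 ^ m) := by omega
        constructor
        -- ---- S_A(k) ----
        · intro hk2
          obtain ⟨jB, hbB, hpB, hBeq, hBstr⟩ := (ih s (by omega)).2 hs1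
          have hlogs : Nat.log 2 s < m := Nat.log_lt_of_lt_pow (by omega) hsL
          have hbB' : s + jB ≤ 2 ^ m := by
            have hle : (2:ℕ) ^ (Nat.log 2 s + 1) ≤ 2 ^ m :=
              Nat.pow_le_pow_right (by norm_num) hlogs
            omega
          rcases lt_or_eq_of_le (by omega : s + jB ≤ 2 ^ m) with hcase | hcase
          · -- good case : s + jB < 2^m
            refine ⟨jB, by omega, ?_, ?_⟩
            · intro j hj
              have e1 : lam (k + j) = 2 * N - 2 - lam (s + j) := by
                rw [show k + j = 2 ^ m + (s + j) by omega]
                exact hF1 (s + j) (by omega) (by omega)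
              have e2 := hBeq j hj
              omega
            · have e1 : lam (k + jB) = 2 * N - 2 - lam (s + jB) := by
                rw [show k + jB = 2 ^ m + (s + jB) by omega]
                exact hF1 (s + jB) (by omega) (by omega)
              omega
          · -- boundary case : s + jB = 2^m
            have hs2 : 2 ≤ s := by
              rcases Nat.eq_or_lt_of_le hs1 with h1s | h1s
              · exfalso
                have hps0 : s = 2 ^ Nat.log 2 s := by rw [← h1s]; norm_num
                have := hpB hps0
                omega
              · omega
            have hjB1 : 1 ≤ jB := by omega
            have eb : lam (k + jB) = 2 * N - 1 - lam (2 ^ m) := by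
              rw [show k + jB = 2 ^ m + 2 ^ m by omega]; exact hF2
            have hstr : 2 * N - 2 - lam (2 ^ m) < lam (1 + jB) := by
              have e := hBstr
              rw [show s + jB = 2 ^ m by omega] at e
              exact e
            rcases Nat.lt_or_ge (lam (k + jB)) (lam (1 + jB)) with hlt' | hge'
            · -- strict already at jB
              refine ⟨jB, by omega, ?_, hlt'⟩
              intro j hj
              have e1 : lam (k + j) = 2 * N - 2 - lam (s + j) := by
                rw [show k + j = 2 ^ m + (s + j) by omega]
                exact hF1 (s + j) (by omega) (by omega)
              have e2 := hBeq j hj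
              omega
            · -- equality at jB : continue with p = 2^m - s + 2
              have heqb : lam (1 + jB) = 2 * N - 1 - lam (2 ^ m) := by omega
              set p := 2 ^ m - s + 2 with hp_def
              have hp1 : 1 ≤ p := by omega
              have hpk : p < k := by omega
              obtain ⟨j', hb', hp', hEq', hStr'⟩ := (ih p hpk).2 hp1
              have hb'' : p + j' ≤ 2 ^ m := by
                rcases Nat.lt_or_ge p (2 ^ m) with hplt | hpge
                · have hlogp : Nat.log 2 p < m := Nat.log_lt_of_lt_pow (by omega) hplt
                  have hle : (2:ℕ) ^ (Nat.log 2 p + 1) ≤ 2 ^ m :=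
                    Nat.pow_le_pow_right (by norm_num) hlogp
                  omega
                · have hpe : p = 2 ^ m := by omega
                  have hlogp : Nat.log 2 p = m := by rw [hpe, Nat.log_pow (by norm_num)]
                  have hj0 := hp' (by rw [hlogp, hpe])
                  omega
              refine ⟨jB + 1 + j', by omega, ?_, ?_⟩
              · intro j hj
                rcases lt_trichotomy j jB with hlo | heq | hhi
                · have e1 : lam (k + j) = 2 * N - 2 - lam (s + j) := by
                    rw [show k + j = 2 ^ m + (s + j) by omega]
                    exact hF1 (s + j) (by omega) (by omega)
                  have e2 := hBeq j hlo
                  omega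
                · subst heq; omega
                · -- jB < j < jB + 1 + j' ; set u = j - jB ∈ [1, j']
                  have hu1 : 1 ≤ j - jB := by omega
                  have hu2 : j - jB ≤ j' := by omega
                  have e1 : lam (k + j) = 2 * N - 2 - lam (j - jB) := by
                    rw [show k + j = 2 ^ m + 2 ^ m + (j - jB) by omega]
                    exact hF3 (j - jB) (by omega) (by omega)
                  have e2 := hEq' (j - jB - 1) (by omega)
                  rw [show p + (j - jB - 1) = 1 + j by omega,
                    show 1 + (j - jB - 1) = j - jB by omega] at e2
                  have e3 : lam (1 + j) ≤ 2 * N - 2 := hub _ (by omega)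
                  omega
              · have e1 : lam (k + (jB + 1 + j')) = 2 * N - 2 - lam (1 + j') := by
                  rw [show k + (jB + 1 + j') = 2 ^ m + 2 ^ m + (1 + j') by omega]
                  exact hF3 (1 + j') (by omega) (by omega)
                have e2 : lam (1 + (jB + 1 + j')) = lam (p + j') := by
                  rw [show 1 + (jB + 1 + j') = p + j' by omega]
                have e3 : lam (p + j') ≤ 2 * N - 2 := hub _ (by omega)
                have e4 : lam (1 + j') ≤ 2 * N - 2 := hub _ (by omega)
                omega
        -- ---- S_B(k) ----
        · intro _
          rcases Nat.eq_or_lt_of_le hs1 with hs1' | hs2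
          · -- s = 1 : witness 2^m - 1
            refine ⟨2 ^ m - 1, by omega, by omega, ?_, ?_⟩
            · intro i hi
              have e1 : lam (k + i) = 2 * N - 2 - lam (1 + i) := by
                rw [show k + i = 2 ^ m + (1 + i) by omega]
                exact hF1 (1 + i) (by omega) (by omega)
              have e3 : lam (1 + i) ≤ 2 * N - 2 := hub _ (by omega)
              omega
            · have e1 : lam (k + (2 ^ m - 1)) = 2 * N - 1 - lam (2 ^ m) := by
                rw [show k + (2 ^ m - 1) = 2 ^ m + 2 ^ m by omega]
                exact hF2
              have e2 : lam (1 + (2 ^ m - 1)) = lam (2 ^ m) := by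
                rw [show 1 + (2 ^ m - 1) = 2 ^ m by omega]
              omega
          · -- s ≥ 2
            obtain ⟨iA, hiA, hAeq, hAstr⟩ := (ih s (by omega)).1 hs2
            rcases Nat.lt_or_ge (s + iA) (2 ^ m) with hcase | hcase
            · -- good case : use iA
              refine ⟨iA, by omega, by omega, ?_, ?_⟩
              · intro i hi
                have e1 : lam (k + i) = 2 * N - 2 - lam (s + i) := by
                  rw [show k + i = 2 ^ m + (s + i) by omega]
                  exact hF1 (s + i) (by omega) (by omega)
                have e2 := hAeq i hi
                have e3 : lam (s + i) ≤ 2 * N - 2 := hub _ (by omega)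
                omega
              · have e1 : lam (k + iA) = 2 * N - 2 - lam (s + iA) := by
                  rw [show k + iA = 2 ^ m + (s + iA) by omega]
                  exact hF1 (s + iA) (by omega) (by omega)
                have e3 : lam (s + iA) ≤ 2 * N - 2 := hub _ (by omega)
                omega
            · -- wrap case : witness 2^m - s
              have hj : 2 ^ m - s ≤ iA := by omega
              refine ⟨2 ^ m - s, by omega, by omega, ?_, ?_⟩
              · intro i hi
                have e1 : lam (k + i) = 2 * N - 2 - lam (s + i) := by
                  rw [show k + i = 2 ^ m + (s + i) by omega]
                  exact hF1 (s + i) (by omega) (by omega)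
                have e2 := hAeq i (by omega)
                have e3 : lam (s + i) ≤ 2 * N - 2 := hub _ (by omega)
                omega
              · have e1 : lam (k + (2 ^ m - s)) = 2 * N - 1 - lam (2 ^ m) := by
                  rw [show k + (2 ^ m - s) = 2 ^ m + 2 ^ m by omega]
                  exact hF2
                have e4 : lam (2 ^ m) ≤ lam (1 + (2 ^ m - s)) := by
                  rcases Nat.eq_or_lt_of_le hj with hje | hjlt
                  · have e := hAstr
                    rw [show s + iA = 2 ^ m by omega] at e
                    rw [show (1:ℕ) + (2 ^ m - s) = 1 + iA by omega]
                    omega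
                  · have e := hAeq (2 ^ m - s) hjlt
                    rw [show s + (2 ^ m - s) = 2 ^ m by omega] at e
                    omega
                omega
  -- ======== assemble the final statement ========
  intro n hn
  have h4 : (4:ℕ) ≤ 2 ^ n := by
    calc (4:ℕ) = 2 ^ 2 := by norm_num
    _ ≤ 2 ^ n := Nat.pow_le_pow_right (by norm_num) hn
  have hnn : (2:ℕ) ^ (n - 1) + 2 ^ (n - 1) = 2 ^ n := by
    have e : (2:ℕ) ^ (n - 1 + 1) = 2 ^ (n - 1) * 2 := pow_succ 2 (n - 1)
    rw [show n - 1 + 1 = n by omega] at e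
    omega
  have hn1 : (1:ℕ) ≤ 2 ^ (n - 1) := Nat.one_le_two_pow
  constructor
  · intro k hk2 hkle
    obtain ⟨i, hi, heq, hstr⟩ := (key k).1 hk2
    have hlog : Nat.log 2 k < n := Nat.log_lt_of_lt_pow (by omega) (by omega)
    have hle : (2:ℕ) ^ Nat.log 2 k ≤ 2 ^ (n - 1) :=
      Nat.pow_le_pow_right (by norm_num) (by omega)
    exact ⟨i, by omega, heq, hstr⟩
  · intro k hk1 hkle
    obtain ⟨j, hb, hpB, heq, hstr⟩ := (key k).2 hk1
    have hlog : Nat.log 2 k < n := Nat.log_lt_of_lt_pow (by omega) (by omega)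
    have hle : (2:ℕ) ^ (Nat.log 2 k + 1) ≤ 2 ^ n :=
      Nat.pow_le_pow_right (by norm_num) (by omega)
    have hj : j < 2 ^ n - 1 := by
      rcases Nat.lt_or_ge k 2 with hk | hk
      · have hk1' : k = 1 := by omega
        have hj0 := hpB (by rw [hk1']; norm_num)
        omega
      · omega
    exact ⟨j, hj, heq, hstr⟩
end

section
/- Fix N ≥ 2 and let (λ_ℓ) be the Komornik–Loreti sequence for digit set {0,…,2N−2}. For every odd integer n ≥ 3 and every k ∈ {1,…,2^n−1}, if the reflected block (2N−2−λ_k)…(2N−2−λ_{2^n−1}) equals λ_1…λ_{2^n−k}, then λ_{2^n−k+1} = N. -/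
def tm (n : ℕ) : ℕ := (Nat.digits 2 n).sum % 2

lemma tm_zero : tm 0 = 0 := by simp [tm]

lemma tm_le (n : ℕ) : tm n ≤ 1 := Nat.lt_succ_iff.mp (Nat.mod_lt _ (by norm_num))

lemma tm_rec (n : ℕ) (h : 0 < n) : tm n = (n % 2 + tm (n / 2)) % 2 := by
  unfold tm
  rw [Nat.digits_def' (by norm_num) h]
  simp [List.sum_cons, Nat.add_mod]

lemma tm_even (n : ℕ) : tm (2 * n) = tm n := by
  rcases Nat.eq_zero_or_pos n with h | h
  · simp [h]
  · rw [tm_rec (2 * n) (by omega)]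
    have h2 : (2 * n) % 2 = 0 := by omega
    have h3 : (2 * n) / 2 = n := by omega
    rw [h2, h3]
    have := tm_le n
    omega

lemma tm_odd (n : ℕ) : tm (2 * n + 1) = (1 + tm n) % 2 := by
  rw [tm_rec (2 * n + 1) (by omega)]
  have h2 : (2 * n + 1) % 2 = 1 := by omega
  have h3 : (2 * n + 1) / 2 = n := by omega
  rw [h2, h3]

lemma tm_one : tm 1 = 1 := by have := tm_odd 0; simpa [tm_zero] using this

/-- t(2^n + j) + t j = 1 for j < 2^n -/
lemma tm_add_pow : ∀ n : ℕ, ∀ j < 2 ^ n, tm (2 ^ n + j) + tm j = 1 := by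
  intro n
  induction n with
  | zero =>
    intro j hj
    interval_cases j
    simp [tm_one, tm_zero]
  | succ n ih =>
    intro j hj
    rcases Nat.even_or_odd j with ⟨a, ha⟩ | ⟨a, ha⟩
    · have ha' : j = 2 * a := by omega
      have haP : a < 2 ^ n := by have : 2 ^ (n+1) = 2 * 2 ^ n := by ring
                                 omega
      have e1 : 2 ^ (n+1) + j = 2 * (2 ^ n + a) := by have : 2 ^ (n+1) = 2 * 2 ^ n := by ring
                                                      omega
      rw [e1, ha', tm_even, tm_even]
      exact ih a haP
    · have haP : a < 2 ^ n := by have : 2 ^ (n+1) = 2 * 2 ^ n := by ring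
                                 omega
      have e1 : 2 ^ (n+1) + j = 2 * (2 ^ n + a) + 1 := by
        have : 2 ^ (n+1) = 2 * 2 ^ n := by ring
        omega
      have e2 : j = 2 * a + 1 := by omega
      rw [e1, e2, tm_odd, tm_odd]
      have := ih a haP
      have b1 := tm_le (2 ^ n + a)
      have b2 := tm_le a
      omega

lemma tm_pow (n : ℕ) : tm (2 ^ n) = 1 := by
  have := tm_add_pow n 0 (by positivity)
  simpa [tm_zero] using this

lemma tm_pow_sub_one : ∀ n : ℕ, tm (2 ^ n - 1) = n % 2 := by
  intro n
  induction n with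
  | zero => simpa using tm_zero
  | succ n ih =>
    have e : 2 ^ (n+1) - 1 = 2 * (2 ^ n - 1) + 1 := by
      have h1 : 1 ≤ 2 ^ n := Nat.one_le_two_pow
      have : 2 ^ (n+1) = 2 * 2 ^ n := by ring
      omega
    rw [e, tm_odd, ih]
    omega

/-- reflection: (t(2^n−1−j) + t j) % 2 = n % 2 for j < 2^n -/
lemma tm_refl : ∀ n : ℕ, ∀ j < 2 ^ n, (tm (2 ^ n - 1 - j) + tm j) % 2 = n % 2 := by
  intro n
  induction n with
  | zero =>
    intro j hj
    interval_cases j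
    simp [tm_zero]
  | succ n ih =>
    intro j hj
    have hP : 2 ^ (n+1) = 2 * 2 ^ n := by ring
    have h1 : 1 ≤ 2 ^ n := Nat.one_le_two_pow
    rcases Nat.even_or_odd j with ⟨a, ha⟩ | ⟨a, ha⟩
    · have ha' : j = 2 * a := by omega
      have haP : a < 2 ^ n := by omega
      have e1 : 2 ^ (n+1) - 1 - j = 2 * (2 ^ n - 1 - a) + 1 := by omega
      rw [e1, ha', tm_odd, tm_even]
      have := ih a haP
      have b1 := tm_le (2 ^ n - 1 - a)
      have b2 := tm_le a
      omega
    · have ha' : j = 2 * a + 1 := by omega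
      have haP : a < 2 ^ n := by omega
      have e1 : 2 ^ (n+1) - 1 - j = 2 * (2 ^ n - 1 - a) := by omega
      rw [e1, ha', tm_odd, tm_even]
      have := ih a haP
      have b1 := tm_le (2 ^ n - 1 - a)
      have b2 := tm_le a
      omega

lemma tm_two : tm 2 = 1 := by
  have h := tm_even 1
  norm_num [tm_one] at h
  exact h

/-- palindromic or antipalindromic prefix forces next letter 1 -/
lemma tm_pal_apal : ∀ m : ℕ,
    ((∀ i ≤ m, tm i = tm (m - i)) → tm (m + 1) = 1) ∧
    ((∀ i ≤ m, tm i + tm (m - i) = 1) → tm (m + 1) = 1) := by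
  intro m
  induction m using Nat.strong_induction_on with
  | _ m ih =>
  constructor
  · -- palindrome case
    intro h
    rcases Nat.eq_zero_or_pos m with hm | hm
    · subst hm; exact tm_one
    rcases Nat.even_or_odd m with ⟨q, hq⟩ | ⟨q, hq⟩
    · -- m = 2q even, q ≥ 1 : contradiction
      exfalso
      have hq' : m = 2 * q := by omega
      have hq1 : 1 ≤ q := by omega
      have hA : tm (q - 1) = 1 := by
        have h2q := h 2 (by omega)
        have e : m - 2 = 2 * (q - 1) := by omega
        rw [tm_two, e, tm_even] at h2q
        omega
      have hB := h 1 (by omega)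
      have e : m - 1 = 2 * (q - 1) + 1 := by omega
      rw [tm_one, e, tm_odd, hA] at hB
      omega
    · -- m = 2q+1 odd : antipalindrome on q
      have hq' : m = 2 * q + 1 := by omega
      have anti : ∀ i ≤ q, tm i + tm (q - i) = 1 := by
        intro i hi
        have := h (2 * i) (by omega)
        have e : m - 2 * i = 2 * (q - i) + 1 := by omega
        rw [e, tm_odd, tm_even] at this
        have b1 := tm_le i
        have b2 := tm_le (q - i)
        omega
      have := (ih q (by omega)).2 anti
      have e : m + 1 = 2 * (q + 1) := by omega
      rw [e, tm_even]
      exact this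
  · -- antipalindrome case
    intro h
    rcases Nat.eq_zero_or_pos m with hm | hm
    · exfalso
      have := h 0 (by omega)
      simp [hm, tm_zero] at this
    rcases Nat.even_or_odd m with ⟨r, hr⟩ | ⟨r, hr⟩
    · -- m = 2r even, r ≥ 1 : contradiction
      exfalso
      have hr' : m = 2 * r := by omega
      have hr1 : 1 ≤ r := by omega
      have hA : tm (r - 1) = 0 := by
        have h2q := h 2 (by omega)
        have e : m - 2 = 2 * (r - 1) := by omega
        rw [tm_two, e, tm_even] at h2q
        omega
      have hB := h 1 (by omega)
      have e : m - 1 = 2 * (r - 1) + 1 := by omega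
      rw [tm_one, e, tm_odd, hA] at hB
      omega
    · -- m = 2r+1 : palindrome on r
      have hr' : m = 2 * r + 1 := by omega
      have pal : ∀ i ≤ r, tm i = tm (r - i) := by
        intro i hi
        have := h (2 * i) (by omega)
        have e : m - 2 * i = 2 * (r - i) + 1 := by omega
        rw [e, tm_odd, tm_even] at this
        have b1 := tm_le i
        have b2 := tm_le (r - i)
        omega
      have := (ih r (by omega)).1 pal
      have e : m + 1 = 2 * (r + 1) := by omega
      rw [e, tm_even]
      exact this

lemma lam_formula (N : ℕ) (hN : 2 ≤ N) (lam : ℕ → ℕ)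
    (h1 : lam 1 = N)
    (h2 : ∀ n : ℕ, lam (2 ^ (n + 1)) = 2 * N - 1 - lam (2 ^ n))
    (h3 : ∀ n : ℕ, 1 ≤ n → ∀ ℓ, 1 ≤ ℓ → ℓ < 2 ^ n → lam (2 ^ n + ℓ) = 2 * N - 2 - lam ℓ) :
    ∀ ℓ : ℕ, 1 ≤ ℓ → (lam ℓ : ℤ) = (N : ℤ) - 1 + tm ℓ - tm (ℓ - 1) := by
  intro ℓ
  induction ℓ using Nat.strong_induction_on with
  | _ ℓ ih =>
  intro hℓ
  rcases eq_or_lt_of_le hℓ with h | h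
  · -- ℓ = 1
    rw [← h]
    simp [h1, tm_one, tm_zero]
  · -- ℓ ≥ 2
    obtain ⟨n, hlow, hhigh⟩ : ∃ n, 2 ^ n ≤ ℓ ∧ ℓ < 2 ^ (n + 1) :=
      ⟨Nat.log 2 ℓ, Nat.pow_log_le_self 2 (by omega),
        Nat.lt_pow_succ_log_self (by norm_num) ℓ⟩
    have hn1 : 1 ≤ n := by
      by_contra hc
      push_neg at hc
      interval_cases n
      · simp at hhigh; omega
    rcases eq_or_lt_of_le hlow with he | hlt
    · -- ℓ = 2^n, n = j+1
      obtain ⟨j, rfl⟩ : ∃ j, n = j + 1 := ⟨n - 1, by omega⟩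
      have hj1 : 1 ≤ 2 ^ j := Nat.one_le_two_pow
      have hjl : 2 ^ j < ℓ := by
        rw [← he]; have : 2 ^ (j+1) = 2 * 2 ^ j := by ring
        omega
      have ihj := ih (2 ^ j) hjl hj1
      -- bound: lam (2^j) ≤ N as ℤ
      have b1 := tm_le (2 ^ j)
      have b2 := tm_le (2 ^ j - 1)
      have hc := h2 j
      rw [he] at hc
      -- cast hc
      have hcz : (lam ℓ : ℤ) = 2 * N - 1 - lam (2 ^ j) := by
        have hle : lam (2 ^ j) ≤ 2 * N - 1 := by omega
        omega
      rw [hcz, ihj]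
      rw [← he]
      rw [tm_pow]
      have e1 : 2 ^ (j + 1) - 1 = 2 ^ (j+1) - 1 := rfl
      rw [tm_pow_sub_one, tm_pow, tm_pow_sub_one]
      have : (j+1) % 2 + j % 2 = 1 := by omega
      push_cast
      omega
    · -- 2^n < ℓ < 2^(n+1)
      set r := ℓ - 2 ^ n with hr
      have hr1 : 1 ≤ r := by omega
      have hr2 : r < 2 ^ n := by
        have : 2 ^ (n+1) = 2 * 2 ^ n := by ring
        omega
      have hrl : r < ℓ := by have : 1 ≤ 2 ^ n := Nat.one_le_two_pow; omega
      have ihr := ih r hrl hr1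
      have b1 := tm_le r
      have b2 := tm_le (r - 1)
      have hc := h3 n hn1 r hr1 hr2
      have heℓ : 2 ^ n + r = ℓ := by omega
      rw [heℓ] at hc
      have hcz : (lam ℓ : ℤ) = 2 * N - 2 - lam r := by
        have : lam r ≤ 2 * N - 2 := by omega
        omega
      have s1 : tm ℓ + tm r = 1 := by rw [← heℓ]; exact tm_add_pow n r hr2
      have s2 : tm (ℓ - 1) + tm (r - 1) = 1 := by
        have e : ℓ - 1 = 2 ^ n + (r - 1) := by omega
        rw [e]
        exact tm_add_pow n (r - 1) (by omega)
      rw [hcz, ihr]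
      omega

/-- for odd n ≥ 3 and 1 ≤ k ≤ 2^n−1, if
(2N−2−λ_k)…(2N−2−λ_{2^n−1}) = λ_1…λ_{2^n−k}, then λ_{2^n−k+1} = N. -/
theorem stmt15 (N : ℕ) (hN : 2 ≤ N) (lam : ℕ → ℕ)
    (h1 : lam 1 = N)
    (h2 : ∀ n : ℕ, lam (2 ^ (n + 1)) = 2 * N - 1 - lam (2 ^ n))
    (h3 : ∀ n : ℕ, 1 ≤ n → ∀ ℓ, 1 ≤ ℓ → ℓ < 2 ^ n → lam (2 ^ n + ℓ) = 2 * N - 2 - lam ℓ)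
    (n : ℕ) (hn : 3 ≤ n) (hodd : Odd n)
    (k : ℕ) (hk1 : 1 ≤ k) (hk2 : k ≤ 2 ^ n - 1)
    (heq : ∀ i < 2 ^ n - k, 2 * N - 2 - lam (k + i) = lam (1 + i)) :
    lam (2 ^ n - k + 1) = N := by
  have F := lam_formula N hN lam h1 h2 h3
  have hpow : 8 ≤ 2 ^ n := by
    calc (8:ℕ) = 2 ^ 3 := by norm_num
    _ ≤ 2 ^ n := Nat.pow_le_pow_right (by norm_num) hn
  set m := 2 ^ n - k with hm
  have hm1 : 1 ≤ m := by omega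
  have hkm : k + m = 2 ^ n := by omega
  have hmlt : m < 2 ^ n := by omega
  -- translate heq into Thue-Morse relation
  have key : ∀ i < m, (tm (i + 1) : ℤ) + tm (k + i) = tm i + tm (k - 1 + i) := by
    intro i hi
    have hq := heq i hi
    have FA := F (1 + i) (by omega)
    have FB := F (k + i) (by omega)
    have e1 : 1 + i - 1 = i := by omega
    have e2 : k + i - 1 = k - 1 + i := by omega
    rw [e1] at FA
    rw [e2] at FB
    have b1 := tm_le (k + i)
    have b2 := tm_le (k - 1 + i)
    -- from FB: lam (k+i) ≤ N ≤ 2N-2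
    have hb : (lam (k + i) : ℤ) ≤ N := by omega
    have hb' : lam (k + i) ≤ 2 * N - 2 := by omega
    -- heq as integers
    have hqz : (lam (1 + i) : ℤ) = 2 * N - 2 - lam (k + i) := by omega
    rw [hqz] at FA
    have b3 := tm_le (i + 1)
    have b4 := tm_le i
    have e3 : tm (1 + i) = tm (i + 1) := by rw [Nat.add_comm]
    rw [e3] at FA
    omega
  -- base: tm (k-1) = 1, tm k = 0
  have base : tm (k - 1) = 1 ∧ tm k = 0 := by
    have := key 0 (by omega)
    simp only [Nat.add_zero, Nat.zero_add] at this
    rw [tm_one] at this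
    have b1 := tm_le (k - 1)
    have b2 := tm_le k
    rw [tm_zero] at this
    constructor <;> omega
  -- star: ∀ i ≤ m, tm i + tm (k-1+i) = 1
  have star : ∀ i ≤ m, tm i + tm (k - 1 + i) = 1 := by
    intro i
    induction i with
    | zero => intro _; simp [tm_zero, base.1]
    | succ i ihi =>
      intro hle
      have hprev := ihi (by omega)
      have hk := key i (by omega)
      have e : k - 1 + (i + 1) = k + i := by omega
      rw [e]
      have b1 := tm_le (i + 1)
      have b2 := tm_le (k + i)
      omega
  -- palindrome: ∀ i ≤ m, tm i = tm (m - i)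
  have pal : ∀ i ≤ m, tm i = tm (m - i) := by
    intro i hi
    have hrefl := tm_refl n (m - i) (by omega)
    have e : 2 ^ n - 1 - (m - i) = k - 1 + i := by omega
    rw [e] at hrefl
    have hstar := star i hi
    have hodd' : n % 2 = 1 := Nat.odd_iff.mp hodd
    have b1 := tm_le i
    have b2 := tm_le (m - i)
    have b3 := tm_le (k - 1 + i)
    omega
  have htm : tm m = 0 := by
    have := pal 0 (by omega)
    simp [tm_zero] at this
    omega
  have htm1 : tm (m + 1) = 1 := (tm_pal_apal m).1 pal
  have FM := F (m + 1) (by omega)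
  simp only [Nat.add_sub_cancel] at FM
  rw [htm, htm1] at FM
  omega
end

section
/- Fix N ≥ 2 and let (λ_ℓ) be the Komornik–Loreti sequence for digit set {0,…,2N−2}. For odd n ≥ 3 define the eventually periodic sequence C_n^∞ = λ_1…λ_{2^n}(λ_{2^n+1}…λ_{2^{n+1}})^∞. Then for every k ≥ 1, the k-fold shift σ^k(C_n^∞) is strictly smaller than C_n^∞ in the lexicographical order. -/
/-- The eventually periodic sequence C_n^∞ = λ_1…λ_{2^n}(λ_{2^n+1}…λ_{2^{n+1}})^∞,
written 0-indexed. -/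
def CnSeq (lam : ℕ → ℕ) (n : ℕ) : ℕ → ℕ := fun i =>
  if i < 2 ^ n then lam (i + 1) else lam (2 ^ n + 1 + (i - 2 ^ n) % 2 ^ n)

namespace KLaux


def t (k : ℕ) : ℕ := (Nat.digits 2 k).sum % 2

lemma t_le (k : ℕ) : t k ≤ 1 := by
  have : t k < 2 := Nat.mod_lt _ (by norm_num)
  omega

lemma t_zero : t 0 = 0 := by simp [t]
lemma t_one : t 1 = 1 := by simp [t]

lemma t_two_mul (k : ℕ) : t (2 * k) = t k := by
  rcases Nat.eq_zero_or_pos k with h | h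
  · simp [h]
  · have h1 : Nat.digits 2 (2 * k) = (2 * k) % 2 :: Nat.digits 2 ((2 * k) / 2) :=
      Nat.digits_def' (by norm_num) (by omega)
    have h2 : (2 * k) / 2 = k := by omega
    have h3 : (2 * k) % 2 = 0 := by omega
    simp [t, h1, h2, h3]

lemma t_two_mul_add_one (k : ℕ) : t (2 * k + 1) = 1 - t k := by
  have h1 : Nat.digits 2 (2 * k + 1) = (2 * k + 1) % 2 :: Nat.digits 2 ((2 * k + 1) / 2) :=
    Nat.digits_def' (by norm_num) (by omega)
  have h2 : (2 * k + 1) / 2 = k := by omega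
  have h3 : (2 * k + 1) % 2 = 1 := by omega
  rw [t, t, h1, h2, h3]
  simp only [List.sum_cons]
  omega

lemma t_compl : ∀ m r, r < 2 ^ m → t (2 ^ m + r) = 1 - t r := by
  intro m
  induction m with
  | zero =>
    intro r hr
    have : r = 0 := by omega
    subst this
    have := t_zero; have := t_one
    norm_num
    omega
  | succ m ih =>
    intro r hr
    have hpm : (2:ℕ) ^ (m+1) = 2 * 2 ^ m := by ring
    have hmod := Nat.mod_two_eq_zero_or_one r
    rcases hmod with hb | hb
    · obtain ⟨q, rfl⟩ : ∃ q, r = 2 * q := ⟨r / 2, by omega⟩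
      have hq : q < 2 ^ m := by omega
      have e : 2 ^ (m+1) + 2 * q = 2 * (2 ^ m + q) := by rw [hpm]; ring
      rw [e, t_two_mul, t_two_mul, ih q hq]
    · obtain ⟨q, rfl⟩ : ∃ q, r = 2 * q + 1 := ⟨r / 2, by omega⟩
      have hq : q < 2 ^ m := by omega
      have e : 2 ^ (m+1) + (2 * q + 1) = 2 * (2 ^ m + q) + 1 := by rw [hpm]; ring
      rw [e, t_two_mul_add_one, t_two_mul_add_one, ih q hq]

lemma t_pow (m : ℕ) : t (2 ^ m) = 1 := by
  have h := t_compl m 0 (by positivity)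
  rw [Nat.add_zero] at h
  have := t_zero
  omega

lemma t_ones : ∀ m, t (2 ^ m - 1) = m % 2 := by
  intro m
  induction m with
  | zero => simpa using t_zero
  | succ m ih =>
    have hpm : (2:ℕ) ^ (m+1) = 2 * 2 ^ m := by ring
    have h1 : (1:ℕ) ≤ 2 ^ m := Nat.one_le_two_pow
    have e : 2 ^ (m+1) - 1 = 2 ^ m + (2 ^ m - 1) := by omega
    rw [e, t_compl m (2 ^ m - 1) (by omega), ih]
    omega

lemma exists_diff : ∀ k, 1 ≤ k →
    ∃ j, j < k ∧ (∀ i, i < j → t (k + i) = t i) ∧ t (k + j) = t k ∧ t j ≠ t k := by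
  intro k
  induction k using Nat.strong_induction_on with
  | _ k IH =>
    intro hk
    have hb := Nat.mod_two_eq_zero_or_one k
    rcases hb with hb | hb
    · -- even
      obtain ⟨k', rfl⟩ : ∃ k', k = 2 * k' := ⟨k / 2, by omega⟩
      have hk' : 1 ≤ k' := by omega
      obtain ⟨j', hj', hag, hval, hne⟩ := IH k' (by omega) hk'
      refine ⟨2 * j', by omega, ?_, ?_, ?_⟩
      · intro i hi
        have hmod := Nat.mod_two_eq_zero_or_one i
        rcases hmod with h | h
        · obtain ⟨i', rfl⟩ : ∃ i', i = 2 * i' := ⟨i / 2, by omega⟩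
          have e : 2 * k' + 2 * i' = 2 * (k' + i') := by ring
          rw [e, t_two_mul, t_two_mul, hag i' (by omega)]
        · obtain ⟨i', rfl⟩ : ∃ i', i = 2 * i' + 1 := ⟨i / 2, by omega⟩
          have e : 2 * k' + (2 * i' + 1) = 2 * (k' + i') + 1 := by ring
          rw [e, t_two_mul_add_one, t_two_mul_add_one, hag i' (by omega)]
      · have e : 2 * k' + 2 * j' = 2 * (k' + j') := by ring
        rw [e, t_two_mul, t_two_mul, hval]
      · rw [t_two_mul, t_two_mul]; exact hne
    · -- odd
      obtain ⟨k', rfl⟩ : ∃ k', k = 2 * k' + 1 := ⟨k / 2, by omega⟩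
      have htk := t_two_mul_add_one k'
      have hlek := t_le k'
      by_cases h0 : t k' = 0
      · refine ⟨0, by omega, by intro i hi; omega, rfl, ?_⟩
        have := t_zero
        omega
      · have h1 : t k' = 1 := by omega
        have hk'1 : 1 ≤ k' := by
          by_contra hcon
          have hz : k' = 0 := by omega
          rw [hz, t_zero] at h1
          omega
        have hle1 := t_le (k' + 1)
        by_cases hnext : t (k' + 1) = 0
        · refine ⟨1, by omega, ?_, ?_, ?_⟩
          · intro i hi
            have : i = 0 := by omega
            subst this
            rw [Nat.add_zero]
            have := t_zero
            omega
          · have e : 2 * k' + 1 + 1 = 2 * (k' + 1) := by ring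
            rw [e, t_two_mul]
            omega
          · have := t_one
            omega
        · have hnext1 : t (k' + 1) = 1 := by omega
          refine ⟨2, by omega, ?_, ?_, ?_⟩
          · intro i hi
            interval_cases i
            · rw [Nat.add_zero]
              have := t_zero
              omega
            · have e : 2 * k' + 1 + 1 = 2 * (k' + 1) := by ring
              rw [e, t_two_mul]
              have := t_one
              omega
          · have e : 2 * k' + 1 + 2 = 2 * (k' + 1) + 1 := by ring
            rw [e, t_two_mul_add_one]
            omega
          · have e : t (2 * 1) = t 1 := t_two_mul 1
            norm_num at e
            have := t_one
            omega

lemma exists_diff_compl : ∀ k, 1 ≤ k → t k = 1 →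
    ∃ j, j ≤ k ∧ (∀ i, i < j → t (k + i) = 1 - t i) ∧ t (k + j) = 1 ∧ t j = 1 ∧
      (∀ m, k < 2 ^ m → k + j ≤ 2 ^ m ∧ (k + j = 2 ^ m → ∃ v, j = 2 ^ v)) := by
  intro k
  induction k using Nat.strong_induction_on with
  | _ k IH =>
    intro hk htk1
    have hb := Nat.mod_two_eq_zero_or_one k
    rcases hb with hb | hb
    · -- even
      obtain ⟨k', rfl⟩ : ∃ k', k = 2 * k' := ⟨k / 2, by omega⟩
      have htk' : t k' = 1 := by rw [← t_two_mul k']; exact htk1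
      have hk' : 1 ≤ k' := by omega
      obtain ⟨j', hj', hag, hval, htj', hcl⟩ := IH k' (by omega) hk' htk'
      refine ⟨2 * j', by omega, ?_, ?_, ?_, ?_⟩
      · intro i hi
        have hmod := Nat.mod_two_eq_zero_or_one i
        rcases hmod with h | h
        · obtain ⟨i', rfl⟩ : ∃ i', i = 2 * i' := ⟨i / 2, by omega⟩
          have e : 2 * k' + 2 * i' = 2 * (k' + i') := by ring
          rw [e, t_two_mul, t_two_mul, hag i' (by omega)]
        · obtain ⟨i', rfl⟩ : ∃ i', i = 2 * i' + 1 := ⟨i / 2, by omega⟩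
          have e : 2 * k' + (2 * i' + 1) = 2 * (k' + i') + 1 := by ring
          have h1 := hag i' (by omega)
          have h2 := t_le i'
          rw [e, t_two_mul_add_one, t_two_mul_add_one, h1]
      · have e : 2 * k' + 2 * j' = 2 * (k' + j') := by ring
        rw [e, t_two_mul]
        exact hval
      · rw [t_two_mul]
        exact htj'
      · intro m hm
        have hm1 : 1 ≤ m := by
          by_contra hcon
          have hz : m = 0 := by omega
          rw [hz] at hm
          norm_num at hm
          omega
        obtain ⟨m', rfl⟩ : ∃ m', m = m' + 1 := ⟨m - 1, by omega⟩
        have hpm : (2:ℕ) ^ (m' + 1) = 2 * 2 ^ m' := by ring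
        obtain ⟨hle, heq⟩ := hcl m' (by omega)
        constructor
        · omega
        · intro he
          obtain ⟨v, hv⟩ := heq (by omega)
          exact ⟨v + 1, by rw [hv]; ring⟩
    · -- odd
      obtain ⟨k', rfl⟩ : ∃ k', k = 2 * k' + 1 := ⟨k / 2, by omega⟩
      have htk := t_two_mul_add_one k'
      have hlek := t_le k'
      have htk' : t k' = 0 := by omega
      have hle1 := t_le (k' + 1)
      by_cases h1 : t (k' + 1) = 1
      · -- j = 1
        refine ⟨1, by omega, ?_, ?_, ?_, ?_⟩
        · intro i hi
          have : i = 0 := by omega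
          subst this
          rw [Nat.add_zero]
          have := t_zero
          omega
        · have e : 2 * k' + 1 + 1 = 2 * (k' + 1) := by ring
          rw [e, t_two_mul]
          exact h1
        · exact t_one
        · intro m hm
          exact ⟨by omega, fun _ => ⟨0, by norm_num⟩⟩
      · -- j = 2
        have h1' : t (k' + 1) = 0 := by omega
        have hk'1 : 1 ≤ k' := by
          by_contra hcon
          have hz : k' = 0 := by omega
          rw [hz] at h1'
          rw [t_one] at h1'
          omega
        refine ⟨2, by omega, ?_, ?_, ?_, ?_⟩
        · intro i hi
          interval_cases i
          · rw [Nat.add_zero]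
            have := t_zero
            omega
          · have e : 2 * k' + 1 + 1 = 2 * (k' + 1) := by ring
            rw [e, t_two_mul]
            have := t_one
            omega
        · have e : 2 * k' + 1 + 2 = 2 * (k' + 1) + 1 := by ring
          rw [e, t_two_mul_add_one]
          omega
        · have e : t (2 * 1) = t 1 := t_two_mul 1
          norm_num at e
          have := t_one
          omega
        · intro m hm
          have hm1 : 1 ≤ m := by
            by_contra hcon
            have hz : m = 0 := by omega
            rw [hz] at hm
            norm_num at hm
          obtain ⟨m', rfl⟩ : ∃ m', m = m' + 1 := ⟨m - 1, by omega⟩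
          have hpm : (2:ℕ) ^ (m' + 1) = 2 * 2 ^ m' := by ring
          constructor
          · by_contra hcon
            have hkp : k' + 1 = 2 ^ m' := by omega
            rw [hkp, t_pow] at h1'
            omega
          · intro _
            exact ⟨1, by norm_num⟩

def ss (n i : ℕ) : ℕ := if i < 2 ^ n then t i else 1 - t ((i - 2 ^ n) % 2 ^ n)

lemma ss_le (n i : ℕ) : ss n i ≤ 1 := by
  unfold ss
  split
  · exact t_le i
  · omega

lemma ss_eq_t (n : ℕ) : ∀ i, i ≤ 2 ^ (n + 1) → ss n i = t i := by
  intro i hi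
  have hpm : (2:ℕ) ^ (n + 1) = 2 * 2 ^ n := by ring
  unfold ss
  split
  · rfl
  · rename_i h
    push_neg at h
    rcases Nat.lt_or_ge (i - 2 ^ n) (2 ^ n) with hr | hr
    · rw [Nat.mod_eq_of_lt hr]
      have e : i = 2 ^ n + (i - 2 ^ n) := by omega
      conv_rhs => rw [e]
      rw [t_compl n _ hr]
    · have e2 : i - 2 ^ n = 2 ^ n := by omega
      have e : i = 2 ^ (n + 1) := by omega
      rw [e2, Nat.mod_self, t_zero, e, t_pow]

lemma ss_period (n i : ℕ) (h : 2 ^ n ≤ i) : ss n (i + 2 ^ n) = ss n i := by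
  unfold ss
  rw [if_neg (by omega), if_neg (by omega)]
  have e : i + 2 ^ n - 2 ^ n = (i - 2 ^ n) + 2 ^ n := by omega
  rw [e, Nat.add_mod_right]

lemma key (n : ℕ) : ∀ k, 1 ≤ k → ss n k = 0 →
    ∃ j, (∀ i, i < j → ss n (k + i) = ss n i) ∧ ss n (k + j) = 0 ∧ ss n j = 1 := by
  intro k
  induction k using Nat.strong_induction_on with
  | _ k IH =>
    intro hk hsk
    have hpm : (2:ℕ) ^ (n + 1) = 2 * 2 ^ n := by ring
    have hp1 : (1:ℕ) ≤ 2 ^ n := Nat.one_le_two_pow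
    rcases Nat.lt_or_ge k (2 ^ n) with hc1 | hc1
    · -- k < 2^n
      have htk : t k = 0 := by rw [← ss_eq_t n k (by omega)]; exact hsk
      obtain ⟨j, hjk, hag, hval, hne⟩ := exists_diff k hk
      have htj : t j = 1 := by have := t_le j; omega
      refine ⟨j, ?_, ?_, ?_⟩
      · intro i hi
        rw [ss_eq_t n (k + i) (by omega), ss_eq_t n i (by omega), hag i hi]
      · rw [ss_eq_t n (k + j) (by omega)]
        omega
      · rw [ss_eq_t n j (by omega)]
        exact htj
    · rcases Nat.lt_or_ge k (2 ^ (n + 1)) with hc2 | hc2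
      · -- 2^n ≤ k < 2^(n+1)
        have htk : t k = 0 := by rw [← ss_eq_t n k (by omega)]; exact hsk
        have hkne : k ≠ 2 ^ n := by
          intro h
          rw [h, t_pow] at htk
          omega
        have hr1 : 1 ≤ k - 2 ^ n := by omega
        have hrlt : k - 2 ^ n < 2 ^ n := by omega
        have hcompl : t k = 1 - t (k - 2 ^ n) := by
          conv_lhs => rw [show k = 2 ^ n + (k - 2 ^ n) by omega]
          exact t_compl n _ hrlt
        have htr : t (k - 2 ^ n) = 1 := by have := t_le (k - 2 ^ n); omega
        obtain ⟨j, hjr, hag, hval, htj, hcl⟩ := exists_diff_compl (k - 2 ^ n) hr1 htr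
        have hle := (hcl n hrlt).1
        rcases Nat.lt_or_ge (k - 2 ^ n + j) (2 ^ n) with hsum | hsum
        · refine ⟨j, ?_, ?_, ?_⟩
          · intro i hi
            have hti := t_le i
            have e1 : ss n (k + i) = 1 - t (k - 2 ^ n + i) := by
              rw [show k + i = 2 ^ n + (k - 2 ^ n + i) by omega,
                ss_eq_t n (2 ^ n + (k - 2 ^ n + i)) (by omega),
                t_compl n (k - 2 ^ n + i) (by omega)]
            rw [e1, ss_eq_t n i (by omega), hag i hi]
            omega
          · rw [show k + j = 2 ^ n + (k - 2 ^ n + j) by omega,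
              ss_eq_t n (2 ^ n + (k - 2 ^ n + j)) (by omega),
              t_compl n (k - 2 ^ n + j) (by omega), hval]
          · rw [ss_eq_t n j (by omega)]
            exact htj
        · have hsum' : k - 2 ^ n + j = 2 ^ n := by omega
          obtain ⟨v, hv⟩ := (hcl n hrlt).2 hsum'
          have hj1 : 1 ≤ j := by
            rcases Nat.eq_zero_or_pos j with h | h
            · omega
            · exact h
          have h2j : 2 * j ≤ 2 ^ n := by omega
          refine ⟨2 * j, ?_, ?_, ?_⟩
          · intro i hi
            rcases Nat.lt_or_ge i j with hij | hij
            · have hti := t_le i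
              have e1 : ss n (k + i) = 1 - t (k - 2 ^ n + i) := by
                rw [show k + i = 2 ^ n + (k - 2 ^ n + i) by omega,
                  ss_eq_t n (2 ^ n + (k - 2 ^ n + i)) (by omega),
                  t_compl n (k - 2 ^ n + i) (by omega)]
              rw [e1, ss_eq_t n i (by omega), hag i hij]
              omega
            · obtain ⟨x, rfl⟩ : ∃ x, i = j + x := ⟨i - j, by omega⟩
              have hxj : x < j := by omega
              have e1 : ss n (k + (j + x)) = 1 - t x := by
                rw [show k + (j + x) = (2 ^ n + x) + 2 ^ n by omega,
                  ss_period n (2 ^ n + x) (by omega),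
                  ss_eq_t n (2 ^ n + x) (by omega),
                  t_compl n x (by omega)]
              have e2 : ss n (j + x) = 1 - t x := by
                rw [ss_eq_t n (j + x) (by omega), hv, t_compl v x (by omega)]
              rw [e1, e2]
          · rw [show k + 2 * j = (2 ^ n + j) + 2 ^ n by omega,
              ss_period n (2 ^ n + j) (by omega),
              ss_eq_t n (2 ^ n + j) (by omega),
              t_compl n j (by omega), htj]
          · rw [ss_eq_t n (2 * j) (by omega), show 2 * j = 2 ^ (v + 1) by rw [hv]; ring,
              t_pow]
      · -- k ≥ 2^(n+1)
        have hper : ss n (k - 2 ^ n) = ss n k := by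
          rw [← ss_period n (k - 2 ^ n) (by omega), show k - 2 ^ n + 2 ^ n = k by omega]
        obtain ⟨j, hag, h0, h1⟩ := IH (k - 2 ^ n) (by omega) (by omega) (by rw [hper]; exact hsk)
        refine ⟨j, ?_, ?_, h1⟩
        · intro i hi
          rw [show k + i = (k - 2 ^ n + i) + 2 ^ n by omega, ss_period n _ (by omega)]
          exact hag i hi
        · rw [show k + j = (k - 2 ^ n + j) + 2 ^ n by omega, ss_period n _ (by omega)]
          exact h0

lemma lam_eq (N : ℕ) (hN : 2 ≤ N) (lam : ℕ → ℕ)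
    (h1 : lam 1 = N)
    (h2 : ∀ n : ℕ, lam (2 ^ (n + 1)) = 2 * N - 1 - lam (2 ^ n))
    (h3 : ∀ n : ℕ, 1 ≤ n → ∀ ℓ, 1 ≤ ℓ → ℓ < 2 ^ n → lam (2 ^ n + ℓ) = 2 * N - 2 - lam ℓ) :
    ∀ ℓ, 1 ≤ ℓ → lam ℓ + t (ℓ - 1) = N - 1 + t ℓ := by
  intro ℓ
  induction ℓ using Nat.strong_induction_on with
  | _ ℓ IH =>
    intro hℓ
    rcases Nat.lt_or_ge ℓ 2 with h | h
    · have he : ℓ = 1 := by omega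
      subst he
      rw [h1]
      norm_num
      have := t_zero; have := t_one
      omega
    · obtain ⟨m, hm1, hm2⟩ : ∃ m, 2 ^ m ≤ ℓ ∧ ℓ < 2 ^ (m + 1) :=
        ⟨Nat.log 2 ℓ, Nat.pow_log_le_self 2 (by omega), Nat.lt_pow_succ_log_self (by norm_num) ℓ⟩
      have hpm : (2:ℕ) ^ (m + 1) = 2 * 2 ^ m := by ring
      have hmpos : 1 ≤ m := by
        by_contra hcon
        have hz : m = 0 := by omega
        rw [hz] at hm2
        norm_num at hm2
        omega
      rcases Nat.eq_or_lt_of_le hm1 with heq | hlt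
      · -- ℓ = 2^m
        obtain ⟨m', rfl⟩ : ∃ m', m = m' + 1 := ⟨m - 1, by omega⟩
        have hpm' : (2:ℕ) ^ (m' + 1) = 2 * 2 ^ m' := by ring
        have hp1 : (1:ℕ) ≤ 2 ^ m' := Nat.one_le_two_pow
        have e2 := h2 m'
        have eIH := IH (2 ^ m') (by omega) (by omega)
        have t1 := t_ones m'
        have t2 := t_ones (m' + 1)
        have t3 := t_pow m'
        have t4 := t_pow (m' + 1)
        rw [← heq, e2]
        omega
      · obtain ⟨q, rfl⟩ : ∃ q, ℓ = 2 ^ m + q := ⟨ℓ - 2 ^ m, by omega⟩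
        have hq1 : 1 ≤ q := by omega
        have hqlt : q < 2 ^ m := by omega
        have e3 := h3 m (by omega) q hq1 hqlt
        have eIH := IH q (by omega) (by omega)
        have tc1 := t_compl m q hqlt
        have tc2 := t_compl m (q - 1) (by omega)
        have e4 : 2 ^ m + q - 1 = 2 ^ m + (q - 1) := by omega
        rw [e3, e4, tc1, tc2]
        have := t_le q; have := t_le (q - 1)
        omega

lemma bridge (N : ℕ) (hN : 2 ≤ N) (lam : ℕ → ℕ)
    (h1 : lam 1 = N)
    (h2 : ∀ n : ℕ, lam (2 ^ (n + 1)) = 2 * N - 1 - lam (2 ^ n))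
    (h3 : ∀ n : ℕ, 1 ≤ n → ∀ ℓ, 1 ≤ ℓ → ℓ < 2 ^ n → lam (2 ^ n + ℓ) = 2 * N - 2 - lam ℓ)
    (n : ℕ) (hn : 1 ≤ n) (hodd : Odd n) :
    ∀ i, CnSeq lam n i + ss n i = (N - 1) + ss n (i + 1) := by
  intro i
  have hlam := lam_eq N hN lam h1 h2 h3
  have hpm : (2:ℕ) ^ (n + 1) = 2 * 2 ^ n := by ring
  have hp1 : (1:ℕ) ≤ 2 ^ n := Nat.one_le_two_pow
  by_cases hi : i < 2 ^ n
  · unfold CnSeq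
    rw [if_pos hi]
    rw [ss_eq_t n i (by omega), ss_eq_t n (i + 1) (by omega)]
    have e := hlam (i + 1) (by omega)
    have e2 : i + 1 - 1 = i := by omega
    rw [e2] at e
    omega
  · push_neg at hi
    unfold CnSeq
    rw [if_neg (by omega)]
    have hrlt : (i - 2 ^ n) % 2 ^ n < 2 ^ n := Nat.mod_lt _ (by omega)
    have hsi : ss n i = 1 - t ((i - 2 ^ n) % 2 ^ n) := by
      unfold ss
      rw [if_neg (by omega)]
    have hsi1 : ss n (i + 1) = 1 - t (((i - 2 ^ n) % 2 ^ n + 1) % 2 ^ n) := by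
      unfold ss
      rw [if_neg (by omega)]
      have e : i + 1 - 2 ^ n = (i - 2 ^ n) + 1 := by omega
      rw [e, Nat.add_mod, Nat.mod_eq_of_lt (show (1:ℕ) < 2 ^ n by
        calc (1:ℕ) < 2 := by norm_num
        _ = 2 ^ 1 := by norm_num
        _ ≤ 2 ^ n := Nat.pow_le_pow_right (by norm_num) hn)]
    rcases Nat.lt_or_ge ((i - 2 ^ n) % 2 ^ n + 1) (2 ^ n) with hw | hw
    · have e1 : ((i - 2 ^ n) % 2 ^ n + 1) % 2 ^ n = (i - 2 ^ n) % 2 ^ n + 1 :=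
        Nat.mod_eq_of_lt hw
      have e2 : 2 ^ n + 1 + (i - 2 ^ n) % 2 ^ n = 2 ^ n + ((i - 2 ^ n) % 2 ^ n + 1) := by
        omega
      have e3 := h3 n hn ((i - 2 ^ n) % 2 ^ n + 1) (by omega) hw
      have e4 := hlam ((i - 2 ^ n) % 2 ^ n + 1) (by omega)
      have e5 : (i - 2 ^ n) % 2 ^ n + 1 - 1 = (i - 2 ^ n) % 2 ^ n := by omega
      rw [e5] at e4
      have hb1 := t_le ((i - 2 ^ n) % 2 ^ n)
      have hb2 := t_le ((i - 2 ^ n) % 2 ^ n + 1)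
      rw [e2, e3, hsi, hsi1, e1]
      omega
    · have hreq : (i - 2 ^ n) % 2 ^ n + 1 = 2 ^ n := by omega
      have e1 : ((i - 2 ^ n) % 2 ^ n + 1) % 2 ^ n = 0 := by
        rw [hreq, Nat.mod_self]
      have e2 : 2 ^ n + 1 + (i - 2 ^ n) % 2 ^ n = 2 ^ (n + 1) := by omega
      have e3 := h2 n
      have e4 := hlam (2 ^ n) (by omega)
      have e5 : t (2 ^ n - 1) = 1 := by rw [t_ones]; exact Nat.odd_iff.mp hodd
      have e6 := t_pow n
      have e7 : t ((i - 2 ^ n) % 2 ^ n) = 1 := by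
        rw [show (i - 2 ^ n) % 2 ^ n = 2 ^ n - 1 by omega]
        exact e5
      rw [e2, e3, hsi, hsi1, e1, t_zero, e7]
      omega


end KLaux

/-- for odd n ≥ 3 and every k ≥ 1, σ^k(C_n^∞) < C_n^∞. -/
theorem stmt16 (N : ℕ) (hN : 2 ≤ N) (lam : ℕ → ℕ)
    (h1 : lam 1 = N)
    (h2 : ∀ n : ℕ, lam (2 ^ (n + 1)) = 2 * N - 1 - lam (2 ^ n))
    (h3 : ∀ n : ℕ, 1 ≤ n → ∀ ℓ, 1 ≤ ℓ → ℓ < 2 ^ n → lam (2 ^ n + ℓ) = 2 * N - 2 - lam ℓ)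
    (n : ℕ) (hn : 3 ≤ n) (hodd : Odd n) :
    ∀ k, 1 ≤ k → LexLt (fun i => CnSeq lam n (i + k)) (CnSeq lam n) := by
  intro k hk
  have hn1 : 1 ≤ n := by omega
  have hb := KLaux.bridge N hN lam h1 h2 h3 n hn1 hodd
  have hpow : (1:ℕ) < 2 ^ n := by
    calc (1:ℕ) < 2 := by norm_num
    _ = 2 ^ 1 := by norm_num
    _ ≤ 2 ^ n := Nat.pow_le_pow_right (by norm_num) hn1
  have hs0 : KLaux.ss n 0 = 0 := by
    unfold KLaux.ss
    rw [if_pos (by omega)]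
    exact KLaux.t_zero
  have hs1 : KLaux.ss n 1 = 1 := by
    unfold KLaux.ss
    rw [if_pos hpow]
    exact KLaux.t_one
  by_cases hsk : KLaux.ss n k = 0
  · obtain ⟨j, hag, hj0, hj1⟩ := KLaux.key n k hk hsk
    have hjpos : 1 ≤ j := by
      rcases Nat.eq_zero_or_pos j with h | h
      · rw [h] at hj1; omega
      · exact h
    refine ⟨j - 1, ?_, ?_⟩
    · intro m hm
      have e1 := hb (k + m)
      have e2 := hb m
      have e3 := hag m (by omega)
      have e4 := hag (m + 1) (by omega)
      have ec : k + m + 1 = k + (m + 1) := by omega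
      rw [ec] at e1
      show CnSeq lam n (m + k) = CnSeq lam n m
      rw [show m + k = k + m by omega]
      omega
    · have e1 := hb (k + (j - 1))
      have e2 := hb (j - 1)
      have e3 := hag (j - 1) (by omega)
      have ec : k + (j - 1) + 1 = k + j := by omega
      rw [ec] at e1
      have ej : j - 1 + 1 = j := by omega
      rw [ej] at e2
      have hsle := KLaux.ss_le n (j - 1)
      show CnSeq lam n ((j - 1) + k) < CnSeq lam n (j - 1)
      rw [show (j - 1) + k = k + (j - 1) by omega]
      omega
  · have hsk1 : KLaux.ss n k = 1 := by
      have := KLaux.ss_le n k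
      omega
    refine ⟨0, by intro m hm; omega, ?_⟩
    show CnSeq lam n (0 + k) < CnSeq lam n 0
    have e1 := hb k
    have e2 := hb 0
    simp only [Nat.zero_add] at e2 ⊢
    have := KLaux.ss_le n (k + 1)
    omega
end

section
/- For N ≥ 2, the number α_c = (N+1−√((N−1)(N+3)))/2 lies in the interval (1/(2N−1), 1/N) and satisfies 1 = N·α_c + Σ_{j=2}^∞ (N−1)·α_c^j, i.e., the sequence N,(N−1),(N−1),(N−1),… is an α_c-expansion of 1 with digit set {0,…,2N−2}. -/
/-!
`α_c` is the smaller root of `α² - (N + 1) α + 1 = 0`. Summing the geometric tail,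
`N α + (N - 1) α² / (1 - α) = 1` is equivalent to `N α (1 - α) + (N - 1) α² = 1 - α`, which is
exactly this quadratic. The upper and lower bounds reduce, after clearing denominators and squaring,
to `4 (N - 1) > 0` and `4 (N - 1) (2 N - 3) > 0` respectively.
-/

open Real

noncomputable def alphaC (x : ℝ) : ℝ := (x + 1 - √((x - 1) * (x + 3))) / 2

lemma sq_sqrt_sub_one_mul_add_three {x : ℝ} (hx : 1 ≤ x) : √((x - 1) * (x + 3)) ^ 2 = (x - 1) * (x + 3) :=
  sq_sqrt (by nlinarith)

lemma alphaC_sq {x : ℝ} (hx : 1 ≤ x) : alphaC x ^ 2 = (x + 1) * alphaC x - 1 := by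
  unfold alphaC
  linear_combination sq_sqrt_sub_one_mul_add_three hx / 4

lemma one_div_two_mul_sub_one_lt_alphaC {x : ℝ} (hx : 3 / 2 < x) :
    1 / (2 * x - 1) < alphaC x := by
  set s := √((x - 1) * (x + 3))
  have hs : s ^ 2 = (x - 1) * (x + 3) := sq_sqrt_sub_one_mul_add_three (by linarith)
  have key : (2 * x - 1) * s < (2 * x + 3) * (x - 1) := by
    refine lt_of_pow_lt_pow_left₀ 2 (by nlinarith) ?_
    nlinarith
  rw [alphaC, div_lt_div_iff₀ (by linarith) two_pos]
  linarith

lemma alphaC_lt_one_div {x : ℝ} (hx : 1 < x) : alphaC x < 1 / x := by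
  set s := √((x - 1) * (x + 3))
  have hs : s ^ 2 = (x - 1) * (x + 3) := sq_sqrt_sub_one_mul_add_three hx.le
  have key : (x - 1) * (x + 2) < x * s := by
    refine lt_of_pow_lt_pow_left₀ 2 (by positivity) ?_
    nlinarith
  rw [alphaC, div_lt_div_iff₀ two_pos (by linarith)]
  linarith

lemma tsum_mul_pow_add_two {a : ℝ} (c : ℝ) (ha₀ : 0 ≤ a) (ha₁ : a < 1) :
    ∑' j : ℕ, c * a ^ (j + 2) = c * a ^ 2 * (1 - a)⁻¹ := by
  simp_rw [pow_add, mul_comm (a ^ _) (a ^ 2), ← mul_assoc]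
  rw [tsum_mul_left, tsum_geometric_of_lt_one ha₀ ha₁]

lemma one_eq_mul_add_tsum_of_sq_eq {x a : ℝ} (ha₀ : 0 ≤ a) (ha₁ : a < 1)
    (ha : a ^ 2 = (x + 1) * a - 1) :
    1 = x * a + ∑' j : ℕ, (x - 1) * a ^ (j + 2) := by
  have h1a : 1 - a ≠ 0 := by linarith
  rw [tsum_mul_pow_add_two _ ha₀ ha₁]
  field_simp
  linear_combination ha

/-- α_c = (N+1−√((N−1)(N+3)))/2 lies in (1/(2N−1), 1/N) and
satisfies 1 = N·α_c + Σ_{j≥2} (N−1)·α_c^j. -/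
theorem stmt17 (N : ℕ) (hN : 2 ≤ N) :
    (1 / (2 * (N : ℝ) - 1)
        < ((N : ℝ) + 1 - Real.sqrt (((N : ℝ) - 1) * ((N : ℝ) + 3))) / 2) ∧
    (((N : ℝ) + 1 - Real.sqrt (((N : ℝ) - 1) * ((N : ℝ) + 3))) / 2 < 1 / (N : ℝ)) ∧
    (1 = (N : ℝ) * (((N : ℝ) + 1 - Real.sqrt (((N : ℝ) - 1) * ((N : ℝ) + 3))) / 2)
        + ∑' j : ℕ, ((N : ℝ) - 1)
            * ((((N : ℝ) + 1 - Real.sqrt (((N : ℝ) - 1) * ((N : ℝ) + 3))) / 2) ^ (j + 2))) := by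
  have hx : (2 : ℝ) ≤ N := by exact_mod_cast hN
  have hlow := one_div_two_mul_sub_one_lt_alphaC (x := N) (by linarith)
  have hhigh := alphaC_lt_one_div (x := N) (by linarith)
  have hpos : 0 < alphaC N := lt_trans (one_div_pos.2 (by linarith)) hlow
  have hlt1 : alphaC N < 1 := hhigh.trans_le (by rw [div_le_one (by linarith)]; linarith)
  exact ⟨hlow, hhigh, one_eq_mul_add_tsum_of_sq_eq hpos.le hlt1 (alphaC_sq (by linarith))⟩
end

section
/- Let N ≥ 2, β ∈ (1/(2N−1), 1/N), and suppose n ∈ ℕ and β < α_n, where α_n is the unique base in (1/(2N−1),1) whose quasi-greedy expansion of 1 with digit set {0,…,2N−2} is (N(N−1)^{n−1})^∞. Let v = N(N−1)^{n−1} and v̄ = (N−2)(N−1)^{n−1} be blocks of length n. Then every sequence in ∏_{ℓ=1}^∞ {v, v̄} ⊆ {0,…,2N−2}^ℕ satisfies: for all k ≥ 1, ε_{k+1}ε_{k+2}… < δ_1δ_2… whenever ε_k < 2N−2, and (2N−2−ε_{k+1})(2N−2−ε_{k+2})… < δ_1δ_2… whenever ε_k > 0, where (δ_ℓ) is the quasi-greedy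 β-expansion of 1 with digit set {0,…,2N−2}. -/
/-!
Let `d = (N(N-1)^{n-1})^∞` (`blockSeq N n`). Since `β < α` and `d` expands `1` in base `α`, its
value in base `β` is `< 1`, the value of `δ`. Because `Nβ < 1`, among sequences with digits in
`{0,…,2N-2}` the lexicographic order agrees with the order of values as soon as the larger
sequence has all digits `≥ N-1`; hence `d < δ`. Finally every tail of a sequence in `∏ {v, v̄}`,
and of its reflection `2N-2-ε`, either starts with the digit `N-1 < N` or is digitwise `≤ d`.
-/

theorem LexLt.trans {a b c : ℕ → ℕ} (hab : LexLt a b) (hbc : LexLt b c) : LexLt a c := by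
  obtain ⟨j, hj, hlt_j⟩ := hab
  obtain ⟨k, hk, hlt_k⟩ := hbc
  refine ⟨min j k, fun m hm => (hj m (hm.trans_le (min_le_left _ _))).trans
    (hk m (hm.trans_le (min_le_right _ _))), ?_⟩
  rcases lt_trichotomy j k with h | rfl | h
  · rw [min_eq_left h.le, ← hk j h]; exact hlt_j
  · rw [min_self]; exact hlt_j.trans hlt_k
  · rw [min_eq_right h.le, hj k h]; exact hlt_k

theorem LexLe.trans_lt {a b c : ℕ → ℕ} (hab : LexLe a b) (hbc : LexLt b c) : LexLt a c := by
  rcases hab with rfl | hab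
  · exact hbc
  · exact hab.trans hbc

theorem exists_forall_lt_eq_and_ne {a b : ℕ → ℕ} (h : a ≠ b) :
    ∃ k, (∀ m < k, a m = b m) ∧ a k ≠ b k := by
  have hex : ∃ k, a k ≠ b k := Function.ne_iff.mp h
  exact ⟨Nat.find hex, fun m hm => not_ne_iff.mp (Nat.find_min hex hm), Nat.find_spec hex⟩

theorem lexLe_of_le {a b : ℕ → ℕ} (h : a ≤ b) : LexLe a b := by
  by_cases hab : a = b
  · exact Or.inl hab
  · obtain ⟨k, hk, hne⟩ := exists_forall_lt_eq_and_ne hab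
    exact Or.inr ⟨k, hk, (h k).lt_of_ne hne⟩

theorem lexLt_or_lexLt_of_ne {a b : ℕ → ℕ} (h : a ≠ b) : LexLt a b ∨ LexLt b a := by
  obtain ⟨k, hk, hne⟩ := exists_forall_lt_eq_and_ne h
  rcases hne.lt_or_gt with hlt | hgt
  · exact Or.inl ⟨k, hk, hlt⟩
  · exact Or.inr ⟨k, fun m hm => (hk m hm).symm, hgt⟩

noncomputable def expansionValue (β : ℝ) (x : ℕ → ℕ) : ℝ := ∑' i, (x i : ℝ) * β ^ (i + 1)

section ExpansionValue

variable {x y : ℕ → ℕ} {β : ℝ}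

theorem hasSum_const_mul_pow_succ (hβ0 : 0 ≤ β) (hβ1 : β < 1) (c : ℝ) :
    HasSum (fun i : ℕ => c * β ^ (i + 1)) (c * β / (1 - β)) := by
  have hterm : (fun i : ℕ => c * β ^ (i + 1)) = fun i => c * β * β ^ i := funext fun i => by ring
  rw [hterm, div_eq_mul_inv]
  exact (hasSum_geometric_of_lt_one hβ0 hβ1).mul_left (c * β)

theorem summable_digits_mul_pow_succ {M : ℝ} (hx : ∀ i, (x i : ℝ) ≤ M) (hβ0 : 0 ≤ β)
    (hβ1 : β < 1) : Summable (fun i => (x i : ℝ) * β ^ (i + 1)) :=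
  Summable.of_nonneg_of_le (fun i => by positivity)
    (fun i => mul_le_mul_of_nonneg_right (hx i) (by positivity))
    (hasSum_const_mul_pow_succ hβ0 hβ1 M).summable

theorem expansionValue_le {M : ℝ} (hx : ∀ i, (x i : ℝ) ≤ M) (hβ0 : 0 ≤ β) (hβ1 : β < 1) :
    expansionValue β x ≤ M * β / (1 - β) :=
  hasSum_le (fun i => mul_le_mul_of_nonneg_right (hx i) (by positivity))
    (summable_digits_mul_pow_succ hx hβ0 hβ1).hasSum (hasSum_const_mul_pow_succ hβ0 hβ1 M)

theorem le_expansionValue {c : ℝ} (hx : ∀ i, c ≤ (x i : ℝ))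
    (hs : Summable (fun i => (x i : ℝ) * β ^ (i + 1))) (hβ0 : 0 ≤ β) (hβ1 : β < 1) :
    c * β / (1 - β) ≤ expansionValue β x :=
  hasSum_le (fun i => mul_le_mul_of_nonneg_right (hx i) (by positivity))
    (hasSum_const_mul_pow_succ hβ0 hβ1 c) hs.hasSum

theorem summable_shift_mul_pow_succ (hβ : β ≠ 0)
    (hs : Summable (fun i => (x i : ℝ) * β ^ (i + 1))) (K : ℕ) :
    Summable (fun i => (x (i + K) : ℝ) * β ^ (i + 1)) := by
  refine (((summable_nat_add_iff K).mpr hs).mul_left (β ^ K)⁻¹).congr fun i => ?_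
  field_simp
  ring

theorem expansionValue_eq_sum_add_shift (hs : Summable (fun i => (x i : ℝ) * β ^ (i + 1)))
    (K : ℕ) : expansionValue β x = ∑ i ∈ Finset.range K, (x i : ℝ) * β ^ (i + 1) +
      β ^ K * expansionValue β (fun i => x (i + K)) := by
  rw [expansionValue, ← hs.sum_add_tsum_nat_add K, expansionValue, ← tsum_mul_left]
  congr 2 with i
  ring

/-- The tails after the first differing digit differ in value by at most `(M - c) β / (1 - β) < 1`
times its weight, so that digit decides. -/
theorem expansionValue_lt_of_lexLt {c M : ℝ} (hβ0 : 0 < β) (hβ1 : β < 1)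
    (hx : ∀ i, (x i : ℝ) ≤ M) (hy : ∀ i, c ≤ (y i : ℝ))
    (hys : Summable (fun i => (y i : ℝ) * β ^ (i + 1))) (hβ : (M - c + 1) * β < 1)
    (hxy : LexLt x y) : expansionValue β x < expansionValue β y := by
  obtain ⟨k, hprefix, hlt⟩ := hxy
  have hxs := summable_digits_mul_pow_succ hx hβ0.le hβ1
  have htail_x := expansionValue_le (x := fun i => x (i + (k + 1))) (fun i => hx _) hβ0.le hβ1
  have htail_y := le_expansionValue (x := fun i => y (i + (k + 1))) (fun i => hy _)
    (summable_shift_mul_pow_succ hβ0.ne' hys (k + 1)) hβ0.le hβ1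
  have hdigit : (x k : ℝ) + 1 ≤ y k := by exact_mod_cast hlt
  have hbound : M * β / (1 - β) < c * β / (1 - β) + 1 := by
    rw [div_add_one (by linarith), div_lt_div_iff_of_pos_right (by linarith)]
    linarith
  have hsum_eq : ∑ i ∈ Finset.range k, (x i : ℝ) * β ^ (i + 1) =
      ∑ i ∈ Finset.range k, (y i : ℝ) * β ^ (i + 1) :=
    Finset.sum_congr rfl fun i hi => by rw [hprefix i (Finset.mem_range.mp hi)]
  have htails : (x k : ℝ) + expansionValue β (fun i => x (i + (k + 1))) <
      y k + expansionValue β (fun i => y (i + (k + 1))) := by linarith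
  have := mul_lt_mul_of_pos_left htails (pow_pos hβ0 (k + 1))
  rw [expansionValue_eq_sum_add_shift hxs (k + 1), expansionValue_eq_sum_add_shift hys (k + 1),
    Finset.sum_range_succ, Finset.sum_range_succ, hsum_eq]
  linarith

theorem lexLt_of_expansionValue_lt {c M : ℝ} (hβ0 : 0 < β) (hβ1 : β < 1)
    (hx : ∀ i, (x i : ℝ) ≤ M) (hy : ∀ i, c ≤ (y i : ℝ))
    (hys : Summable (fun i => (y i : ℝ) * β ^ (i + 1))) (hβ : (M - c + 1) * β < 1)
    (hyx : expansionValue β y < expansionValue β x) : LexLt y x := by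
  have hne : y ≠ x := by rintro rfl; exact hyx.false
  refine (lexLt_or_lexLt_of_ne hne).resolve_right fun hxy => ?_
  exact (expansionValue_lt_of_lexLt hβ0 hβ1 hx hy hys hβ hxy).not_gt hyx

theorem expansionValue_lt_of_base_lt {α : ℝ} (hβ0 : 0 < β) (hβα : β < α)
    (hsβ : Summable (fun i => (x i : ℝ) * β ^ (i + 1)))
    (hsα : Summable (fun i => (x i : ℝ) * α ^ (i + 1))) (hx0 : 0 < x 0) :
    expansionValue β x < expansionValue α x := by
  refine hsβ.tsum_lt_tsum (i := 0) (fun i => ?_) ?_ hsα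
  · exact mul_le_mul_of_nonneg_left (pow_le_pow_left₀ hβ0.le hβα.le _) (Nat.cast_nonneg _)
  · simpa using mul_lt_mul_of_pos_left hβα (Nat.cast_pos.mpr hx0)

end ExpansionValue

theorem IsExpansionOf1.summable {m : ℕ} {β : ℝ} {d : ℕ → ℕ} (h : IsExpansionOf1 m β d) :
    Summable (fun i => (d i : ℝ) * β ^ (i + 1)) := by
  by_contra hs
  exact zero_ne_one ((tsum_eq_zero_of_not_summable hs).symm.trans h.2)

theorem IsExpansionOf1.digit_le {m : ℕ} {β : ℝ} {d : ℕ → ℕ} (h : IsExpansionOf1 m β d)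
    (i : ℕ) : (d i : ℝ) ≤ m - 1 := by
  have : (d i : ℝ) + 1 ≤ m := by exact_mod_cast h.1 i
  linarith

def blockSeq (N n : ℕ) : ℕ → ℕ := fun i => if i % n = 0 then N else N - 1

theorem blockSeq_le (N n i : ℕ) : blockSeq N n i ≤ N := by
  unfold blockSeq; split <;> omega

theorem le_blockSeq_add_one (N n i : ℕ) : N ≤ blockSeq N n i + 1 := by
  unfold blockSeq; split <;> omega

theorem blockSeq_zero (N n : ℕ) : blockSeq N n 0 = N := by simp [blockSeq]

theorem blockSeq_lexLt_of_isExpansionOf1 {N n m : ℕ} {α β : ℝ} {δ : ℕ → ℕ} (hβ0 : 0 < β)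
    (hNβ : N * β < 1) (hβα : β < α) (hα : IsExpansionOf1 m α (blockSeq N n))
    (hδ : IsExpansionOf1 (2 * N - 1) β δ) : LexLt (blockSeq N n) δ := by
  have hN : 1 ≤ N := by have := hδ.1 0; omega
  have hm : ((2 * N - 1 : ℕ) : ℝ) = 2 * N - 1 := by rw [Nat.cast_sub (by omega)]; push_cast; ring
  have hβ1 : β < 1 := by nlinarith [(Nat.one_le_cast (α := ℝ)).mpr hN]
  have hd_le (i : ℕ) : (blockSeq N n i : ℝ) ≤ N := by exact_mod_cast blockSeq_le N n i
  have hd_ge (i : ℕ) : (N : ℝ) - 1 ≤ blockSeq N n i := by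
    have : (N : ℝ) ≤ blockSeq N n i + 1 := by exact_mod_cast le_blockSeq_add_one N n i
    linarith
  have hdβ := summable_digits_mul_pow_succ hd_le hβ0.le hβ1
  have hd_lt_one : expansionValue β (blockSeq N n) < expansionValue β δ :=
    calc expansionValue β (blockSeq N n) < expansionValue α (blockSeq N n) :=
          expansionValue_lt_of_base_lt hβ0 hβα hdβ hα.summable (by rw [blockSeq_zero]; omega)
      _ = expansionValue β δ := hα.2.trans hδ.2.symm
  exact lexLt_of_expansionValue_lt hβ0 hβ1 hδ.digit_le hd_ge hdβ (by rw [hm]; linarith) hd_lt_one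

theorem lexLt_of_blockSeq_lexLt {N n : ℕ} (hN : 1 ≤ N) {δ e : ℕ → ℕ}
    (hδ : LexLt (blockSeq N n) δ) (he_start : ∀ i, i % n = 0 → e i ≤ N)
    (he_inner : ∀ i, i % n ≠ 0 → e i = N - 1) (j : ℕ) : LexLt (fun i => e (j + i)) δ := by
  by_cases hj : j % n = 0
  · refine LexLe.trans_lt (lexLe_of_le fun i => ?_) hδ
    have hmod : (j + i) % n = i % n := by simp [Nat.add_mod, hj]
    by_cases hi : i % n = 0
    · simpa [blockSeq, hi] using he_start (j + i) (hmod.trans hi)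
    · simp [blockSeq, hi, he_inner (j + i) (hmod.trans_ne hi)]
  · refine LexLt.trans ⟨0, fun m hm => absurd hm (Nat.not_lt_zero m), ?_⟩ hδ
    rw [blockSeq_zero]
    show e j < N
    rw [he_inner j hj]
    omega

theorem stmt18_general (N n : ℕ) (β α : ℝ)
    (hβ1 : 1 / (2 * (N : ℝ) - 1) < β) (hβ2 : β < 1 / (N : ℝ))
    (hαqg : IsQuasiGreedy (2 * N - 1) α (fun i => if i % n = 0 then N else N - 1))
    (hβα : β < α)
    (δ : ℕ → ℕ) (hδ : IsQuasiGreedy (2 * N - 1) β δ)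
    (ε : ℕ → ℕ) (b : ℕ → Bool)
    (hε : ∀ i, ε i = if i % n = 0 then (if b (i / n) then N else N - 2) else N - 1) :
    ∀ k : ℕ, (ε k < 2 * N - 2 → LexLt (fun i => ε (k + 1 + i)) δ) ∧
             (0 < ε k → LexLt (fun i => 2 * N - 2 - ε (k + 1 + i)) δ) := by
  have hN : 1 ≤ N := by have := hδ.1.1 0; omega
  have hNR : (1 : ℝ) ≤ N := by exact_mod_cast hN
  have hβ0 : 0 < β := lt_trans (one_div_pos.mpr (by linarith)) hβ1
  have hNβ : (N : ℝ) * β < 1 := by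
    rwa [lt_div_iff₀ (by linarith), mul_comm] at hβ2
  have hdδ : LexLt (blockSeq N n) δ := blockSeq_lexLt_of_isExpansionOf1 hβ0 hNβ hβα hαqg.1 hδ.1
  intro k
  refine ⟨fun _ => lexLt_of_blockSeq_lexLt hN hdδ ?_ ?_ (k + 1),
    fun _ => lexLt_of_blockSeq_lexLt (e := fun i => 2 * N - 2 - ε i) hN hdδ ?_ ?_ (k + 1)⟩
  all_goals intro i hi; simp only [hε i, hi, if_true, if_false]
  all_goals first | omega | split <;> omega

/-- if β < α_n (the base whose quasi-greedy expansion of 1 is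
(N(N−1)^{n−1})^∞), then every sequence in ∏ {v, v̄} (v = N(N−1)^{n−1},
v̄ = (N−2)(N−1)^{n−1}) satisfies the uniqueness conditions with respect to the
quasi-greedy β-expansion δ of 1. -/
theorem stmt18 (N n : ℕ) (hN : 2 ≤ N) (hn : 1 ≤ n) (β α : ℝ)
    (hβ1 : 1 / (2 * (N : ℝ) - 1) < β) (hβ2 : β < 1 / (N : ℝ))
    (hα1 : 1 / (2 * (N : ℝ) - 1) < α) (hα2 : α < 1)
    (hαqg : IsQuasiGreedy (2 * N - 1) α (fun i => if i % n = 0 then N else N - 1))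
    (hαuniq : ∀ α' : ℝ, 1 / (2 * (N : ℝ) - 1) < α' → α' < 1 →
      IsQuasiGreedy (2 * N - 1) α' (fun i => if i % n = 0 then N else N - 1) → α' = α)
    (hβα : β < α)
    (δ : ℕ → ℕ) (hδ : IsQuasiGreedy (2 * N - 1) β δ)
    (ε : ℕ → ℕ) (b : ℕ → Bool)
    (hε : ∀ i, ε i = if i % n = 0 then (if b (i / n) then N else N - 2) else N - 1) :
    ∀ k : ℕ, (ε k < 2 * N - 2 → LexLt (fun i => ε (k + 1 + i)) δ) ∧
             (0 < ε k → LexLt (fun i => 2 * N - 2 - ε (k + 1 + i)) δ) :=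
  stmt18_general N n β α hβ1 hβ2 hαqg hβα δ hδ ε b hε
end

section
/- Fix N ≥ 2 and let (w_n)_{n≥0} be defined by w_n = λ_1…λ_{2^n}, where (λ_ℓ) is the Komornik–Loreti sequence for digit set {0,…,2N−2}. Then for every n ≥ 0, the concatenated block w_n w̄_n (where w̄_n is the digitwise reflection d ↦ 2N−2−d of w_n) is strictly smaller than w_{n+1} = λ_1…λ_{2^{n+1}} in the lexicographical order; consequently the periodic sequences satisfy (w_0 w̄_0)^∞ < (w_1 w̄_1)^∞ < … < (λ_ℓ)_{ℓ≥1}. -/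
/-- The periodic sequence (w_n w̄_n)^∞ (0-indexed), where w_n = λ_1…λ_{2^n}
and w̄_n is its digitwise reflection d ↦ 2N−2−d. -/
def perWn (N : ℕ) (lam : ℕ → ℕ) (n : ℕ) : ℕ → ℕ := fun i =>
  if i % 2 ^ (n + 1) < 2 ^ n then lam (i % 2 ^ (n + 1) + 1)
  else 2 * N - 2 - lam (i % 2 ^ (n + 1) - 2 ^ n + 1)

/-- w_n w̄_n < w_{n+1} as blocks of length 2^{n+1}; consequently
(w_0 w̄_0)^∞ < (w_1 w̄_1)^∞ < … < (λ_ℓ). -/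
theorem stmt19 (N : ℕ) (hN : 2 ≤ N) (lam : ℕ → ℕ)
    (h1 : lam 1 = N)
    (h2 : ∀ n : ℕ, lam (2 ^ (n + 1)) = 2 * N - 1 - lam (2 ^ n))
    (h3 : ∀ n : ℕ, 1 ≤ n → ∀ ℓ, 1 ≤ ℓ → ℓ < 2 ^ n → lam (2 ^ n + ℓ) = 2 * N - 2 - lam ℓ) :
    (∀ n : ℕ,
      BlockLt (fun i => if i < 2 ^ n then lam (i + 1) else 2 * N - 2 - lam (i - 2 ^ n + 1))
        (fun i => lam (i + 1)) (2 ^ (n + 1))) ∧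
    (∀ n : ℕ, LexLt (perWn N lam n) (perWn N lam (n + 1))) ∧
    (∀ n : ℕ, LexLt (perWn N lam n) (fun i => lam (i + 1))) := by
  -- bound on lam at powers of two
  have hbd : ∀ n : ℕ, 1 ≤ lam (2 ^ n) ∧ lam (2 ^ n) ≤ 2 * N - 2 := by
    intro n
    induction n with
    | zero => simp [h1]; omega
    | succ k ih => rw [h2 k]; omega
  -- key identity: inside the block, the reflected value equals lam
  have hkey : ∀ n i : ℕ, 2 ^ n ≤ i → i + 1 < 2 ^ (n + 1) →
      lam (i + 1) = 2 * N - 2 - lam (i - 2 ^ n + 1) := by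
    intro n i hi hi'
    have hpow : 2 ^ (n + 1) = 2 * 2 ^ n := by ring
    rcases Nat.eq_zero_or_pos n with hn | hn
    · subst hn; simp at hi hi'; omega
    · have hp1 : 1 ≤ 2 ^ n := Nat.one_le_two_pow
      have heq : i + 1 = 2 ^ n + (i - 2 ^ n + 1) := by omega
      rw [heq, h3 n hn _ (by omega) (by omega)]
  have hw : ∀ n : ℕ, 2 ^ n ≤ 2 ^ (n + 1) - 1 ∧ 2 ^ (n + 1) - 1 < 2 ^ (n + 1) := by
    intro n
    have hpow : 2 ^ (n + 1) = 2 * 2 ^ n := by ring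
    have hp1 : 1 ≤ 2 ^ n := Nat.one_le_two_pow
    omega
  -- value of perWn inside the period before the last index
  have hper : ∀ n i : ℕ, i + 1 < 2 ^ (n + 1) → perWn N lam n i = lam (i + 1) := by
    intro n i hi
    unfold perWn
    rw [Nat.mod_eq_of_lt (by omega)]
    by_cases h : i < 2 ^ n
    · rw [if_pos h]
    · rw [if_neg h]
      exact (hkey n i (by omega) hi).symm
  -- value of perWn at the last index of the period
  have hlast : ∀ n : ℕ, perWn N lam n (2 ^ (n + 1) - 1) = 2 * N - 2 - lam (2 ^ n) := by
    intro n
    obtain ⟨hw1, hw2⟩ := hw n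
    unfold perWn
    rw [Nat.mod_eq_of_lt hw2]
    rw [if_neg (by omega)]
    congr 2
    omega
  -- the strict inequality at the last index
  have hlt : ∀ n : ℕ, 2 * N - 2 - lam (2 ^ n) < lam (2 ^ (n + 1)) := by
    intro n
    rw [h2 n]
    obtain ⟨hb1, hb2⟩ := hbd n
    omega
  refine ⟨?_, ?_, ?_⟩
  · intro n
    obtain ⟨hw1, hw2⟩ := hw n
    refine ⟨2 ^ (n + 1) - 1, hw2, ?_, ?_⟩
    · intro j hj
      by_cases hjn : j < 2 ^ n
      · simp [hjn]
      · simp only [if_neg hjn]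
        exact (hkey n j (by omega) (by omega)).symm
    · simp only [if_neg (by omega : ¬ (2 ^ (n + 1) - 1 < 2 ^ n))]
      have he : 2 ^ (n + 1) - 1 - 2 ^ n + 1 = 2 ^ n := by
        have hpow : 2 ^ (n + 1) = 2 * 2 ^ n := by ring
        have hp1 : 1 ≤ 2 ^ n := Nat.one_le_two_pow
        omega
      have he2 : 2 ^ (n + 1) - 1 + 1 = 2 ^ (n + 1) := by omega
      rw [he, he2]
      exact hlt n
  · intro n
    obtain ⟨hw1, hw2⟩ := hw n
    have hmono : 2 ^ (n + 1) < 2 ^ (n + 2) :=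
      Nat.pow_lt_pow_right (by norm_num) (by omega)
    refine ⟨2 ^ (n + 1) - 1, ?_, ?_⟩
    · intro m hm
      rw [hper n m (by omega), hper (n + 1) m (by omega)]
    · rw [hlast n, hper (n + 1) (2 ^ (n + 1) - 1) (by omega)]
      rw [(by omega : 2 ^ (n + 1) - 1 + 1 = 2 ^ (n + 1))]
      exact hlt n
  · intro n
    obtain ⟨hw1, hw2⟩ := hw n
    refine ⟨2 ^ (n + 1) - 1, ?_, ?_⟩
    · intro m hm
      exact hper n m (by omega)
    · rw [hlast n]
      simp only []
      rw [(by omega : 2 ^ (n + 1) - 1 + 1 = 2 ^ (n + 1))]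
      exact hlt n
end
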